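/- arXiv:1401.0893 — 8 statements merged into one kernel-verified Lean document; each statement's English description precedes it below -/
import Mathlib

section
/- Let H = ℤ[x₁,…,xₙ]/(x_j² − α_j x_j) be the cohomology ring of a Bott manifold. If a pair (u, v) of primitive degree-2 elements satisfies uv = 0 in H, then there exist an index j ∈ [n], a nonzero integer a, and an element w of height less than j with w(w + a α_j) = 0, such that either (u, v) = (a x_j + w, a(x_j − α_j) − w) or (u, v) = (a x_j + w, −a(x_j − α_j) + w). -/
open MvPolynomial

noncomputable section

variable {n : ℕ}

/-- `A` is strictly upper triangular. -/
def StrictUpper (A : Matrix (Fin n) (Fin n) ℤ) : Prop :=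
  ∀ i j : Fin n, j ≤ i → A i j = 0

/-- The defining relation `x_j^2 - α_j x_j` where `α_j = ∑_{i<j} A^i_j x_i`. -/
def bottRel (R : Type) [CommRing R] (A : Matrix (Fin n) (Fin n) ℤ) (j : Fin n) :
    MvPolynomial (Fin n) R :=
  X j ^ 2 - (∑ i ∈ Finset.Iio j, C ((A i j : R)) * X i) * X j

def bottIdeal (R : Type) [CommRing R] (A : Matrix (Fin n) (Fin n) ℤ) :
    Ideal (MvPolynomial (Fin n) R) :=
  Ideal.span (Set.range (bottRel R A))

/-- The cohomology ring `H = R[x₁,…,xₙ]/(x_j² − α_j x_j)` of the Bott manifold `M(A)`. -/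
abbrev BottRing (R : Type) [CommRing R] (A : Matrix (Fin n) (Fin n) ℤ) :=
  MvPolynomial (Fin n) R ⧸ bottIdeal R A

/-- the class of `x_j` -/
def bx (R : Type) [CommRing R] (A : Matrix (Fin n) (Fin n) ℤ) (j : Fin n) : BottRing R A :=
  Ideal.Quotient.mk (bottIdeal R A) (X j)

/-- the class of `α_j = ∑_{i<j} A^i_j x_i` -/
def balpha (R : Type) [CommRing R] (A : Matrix (Fin n) (Fin n) ℤ) (j : Fin n) : BottRing R A :=
  Ideal.Quotient.mk (bottIdeal R A) (∑ i ∈ Finset.Iio j, C ((A i j : R)) * X i)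

/-- The degree-`2k` graded piece of `BottRing R A` (each `x_j` has topological degree 2,
i.e. polynomial degree 1): the image of the homogeneous polynomials of degree `k`. -/
def piece (R : Type) [CommRing R] (A : Matrix (Fin n) (Fin n) ℤ) (k : ℕ) :
    Submodule R (BottRing R A) :=
  Submodule.span R
    {z | ∃ p : MvPolynomial (Fin n) R, p.IsHomogeneous k ∧ Ideal.Quotient.mk (bottIdeal R A) p = z}

/-- A ring isomorphism is graded if it identifies the graded pieces. -/
def IsGradedIso {R : Type} [CommRing R] {A B : Matrix (Fin n) (Fin n) ℤ}
    (ψ : BottRing R A ≃+* BottRing R B) : Prop :=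
  ∀ (k : ℕ) (z : BottRing R A), z ∈ piece R A k ↔ ψ z ∈ piece R B k

/-- `2x_j − α_j = 2y_j`, an integral class -/
def ty (A : Matrix (Fin n) (Fin n) ℤ) (j : Fin n) : BottRing ℤ A :=
  2 • bx ℤ A j - balpha ℤ A j

/-- `y_j = x_j − (1/2)α_j` in rational cohomology -/
def yq (A : Matrix (Fin n) (Fin n) ℤ) (j : Fin n) : BottRing ℚ A :=
  bx ℚ A j - (2⁻¹ : ℚ) • balpha ℚ A j

/-- `α_j ≡ 0 (mod 2)` -/
def EvenAlpha (A : Matrix (Fin n) (Fin n) ℤ) (j : Fin n) : Prop :=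
  ∀ i : Fin n, i < j → 2 ∣ A i j

/-- the total Pontrjagin class `p(M(A)) = ∏_j (1 + α_j²)` -/
def pont (A : Matrix (Fin n) (Fin n) ℤ) : BottRing ℤ A :=
  ∏ j : Fin n, (1 + balpha ℤ A j ^ 2)

/-- the matrix `(E − (1/2)A)⁻¹` over ℚ; its `(i,j)` entry is `a^i_j` -/
def ainv (A : Matrix (Fin n) (Fin n) ℤ) : Matrix (Fin n) (Fin n) ℚ :=
  ((1 : Matrix (Fin n) (Fin n) ℚ) - (2⁻¹ : ℚ) • A.map (Int.cast))⁻¹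

/-- `α_j` is of even exceptional type: `α_j = c·y_i` (equivalently `2α_j = c·(2y_i)`)
with `c` a nonzero even integer and `i < j`. -/
def EvenExc (A : Matrix (Fin n) (Fin n) ℤ) (j : Fin n) : Prop :=
  ∃ (c : ℤ) (i : Fin n), c ≠ 0 ∧ Even c ∧ i < j ∧ (2 : ℤ) • balpha ℤ A j = c • ty A i

/-- the permutation matrix `P` of `σ⁻¹`: `P i j = 1` iff `i = σ j` -/
def permMat (σ : Equiv.Perm (Fin n)) : Matrix (Fin n) (Fin n) ℤ :=
  Matrix.of fun i j => if i = σ j then 1 else 0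

namespace PVP

lemma coeff_single_mul_X (f : MvPolynomial (Fin n) ℤ) (i t : Fin n) :
    coeff (Finsupp.single i 1) (f * X t) = if t = i then constantCoeff f else 0 := by
  rw [coeff_mul_X']
  by_cases h : t = i
  · subst h; simp [Finsupp.mem_support_iff, constantCoeff_eq]
  · simp [Finsupp.single_apply, Finsupp.mem_support_iff, Ne.symm h, h]

lemma coeff_pair_mul_X (f : MvPolynomial (Fin n) ℤ) (i k t : Fin n) (hik : i ≠ k) :
    coeff (Finsupp.single i 1 + Finsupp.single k 1) (f * X t) =
      if t = i then coeff (Finsupp.single k 1) f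
      else if t = k then coeff (Finsupp.single i 1) f else 0 := by
  rw [coeff_mul_X']
  by_cases hi : t = i
  · subst hi
    have h1 : Finsupp.single t 1 + Finsupp.single k 1 - Finsupp.single t 1 =
        Finsupp.single k 1 := by
      rw [add_comm]; exact add_tsub_cancel_right _ _
    simp [h1, Finsupp.mem_support_iff, Finsupp.single_apply, hik]
  · by_cases hk : t = k
    · subst hk
      have h1 : Finsupp.single i 1 + Finsupp.single t 1 - Finsupp.single t 1 =
          Finsupp.single i 1 := add_tsub_cancel_right _ _
      simp [h1, Finsupp.mem_support_iff, Finsupp.single_apply, hik, Ne.symm hik]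
    · have : t ∉ (Finsupp.single i 1 + Finsupp.single k 1).support := by
        simp [Finsupp.mem_support_iff, Finsupp.single_apply, Ne.symm hi, Ne.symm hk]
      simp [this, hi, hk]

lemma coeff_double_mul_X (f : MvPolynomial (Fin n) ℤ) (k t : Fin n) :
    coeff (Finsupp.single k 2) (f * X t) =
      if t = k then coeff (Finsupp.single k 1) f else 0 := by
  rw [coeff_mul_X']
  by_cases h : t = k
  · subst h
    have h1 : Finsupp.single t 2 - Finsupp.single t 1 = Finsupp.single t 1 := by
      rw [← Finsupp.single_tsub]
    simp [h1, Finsupp.mem_support_iff]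
  · simp [Finsupp.mem_support_iff, Finsupp.single_apply, Ne.symm h, h]

def L (c : Fin n → ℤ) : MvPolynomial (Fin n) ℤ := ∑ i, C (c i) * X i

lemma coeff_single_L (c : Fin n → ℤ) (i : Fin n) :
    coeff (Finsupp.single i 1) (L c) = c i := by
  rw [L, coeff_sum]
  rw [Finset.sum_eq_single i]
  · rw [coeff_C_mul, coeff_X', if_pos rfl, mul_one]
  · intro b _ hb
    have hne : Finsupp.single b 1 ≠ Finsupp.single i 1 := by
      intro h; exact hb ((Finsupp.single_left_inj one_ne_zero).mp h)
    rw [coeff_C_mul, coeff_X', if_neg hne, mul_zero]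
  · intro h; exact absurd (Finset.mem_univ i) h

lemma coeff_pair_LL (c d : Fin n → ℤ) (i k : Fin n) (hik : i ≠ k) :
    coeff (Finsupp.single i 1 + Finsupp.single k 1) (L c * L d) =
      c i * d k + c k * d i := by
  have hexp : L c * L d = ∑ t, (C (c t) * L d) * X t := by
    rw [L, Finset.sum_mul]
    exact Finset.sum_congr rfl fun t _ => by ring
  rw [hexp, coeff_sum]
  have : ∀ t : Fin n,
      coeff (Finsupp.single i 1 + Finsupp.single k 1) ((C (c t) * L d) * X t)
      = (if t = i then c t * d k else 0) + (if t = k then c t * d i else 0) := by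
    intro t
    rw [coeff_pair_mul_X _ _ _ _ hik]
    by_cases hi : t = i
    · subst hi; rw [coeff_C_mul, coeff_single_L]; simp [hik]
    · by_cases hk : t = k
      · subst hk; rw [if_neg hi, if_pos rfl, coeff_C_mul, coeff_single_L]; simp [hi]
      · simp [hi, hk]
  rw [Finset.sum_congr rfl fun t _ => this t, Finset.sum_add_distrib,
    Finset.sum_ite_eq' Finset.univ i, Finset.sum_ite_eq' Finset.univ k]
  simp

lemma coeff_double_LL (c d : Fin n → ℤ) (k : Fin n) :
    coeff (Finsupp.single k 2) (L c * L d) = c k * d k := by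
  have hexp : L c * L d = ∑ t, (C (c t) * L d) * X t := by
    rw [L, Finset.sum_mul]
    exact Finset.sum_congr rfl fun t _ => by ring
  rw [hexp, coeff_sum]
  have : ∀ t : Fin n,
      coeff (Finsupp.single k 2) ((C (c t) * L d) * X t)
      = if t = k then c t * d k else 0 := by
    intro t
    rw [coeff_double_mul_X]
    by_cases hk : t = k
    · subst hk; rw [if_pos rfl, if_pos rfl, coeff_C_mul, coeff_single_L]
    · simp [hk]
  rw [Finset.sum_congr rfl fun t _ => this t, Finset.sum_ite_eq' Finset.univ k]
  simp


lemma coeff_pair_mul_rel (A : Matrix (Fin n) (Fin n) ℤ) (f : MvPolynomial (Fin n) ℤ)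
    (i k j : Fin n) (hik : i < k) :
    coeff (Finsupp.single i 1 + Finsupp.single k 1) (f * bottRel ℤ A j) =
      if j = k then -(A i k * constantCoeff f) else 0 := by
  have hexp : f * bottRel ℤ A j =
      (f * X j) * X j - ∑ t ∈ Finset.Iio j, (C ((A t j : ℤ)) * (f * X t)) * X j := by
    rw [bottRel, mul_sub]
    congr 1
    · ring
    · rw [Finset.sum_mul, Finset.mul_sum]
      refine Finset.sum_congr rfl fun t _ => by push_cast; ring
  rw [hexp, coeff_sub, coeff_sum]
  rw [coeff_pair_mul_X _ _ _ _ hik.ne]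
  by_cases hjk : j = k
  · subst hjk
    rw [if_neg hik.ne', if_pos rfl, coeff_single_mul_X, if_neg hik.ne']
    have hsum : ∀ t ∈ Finset.Iio j,
        coeff (Finsupp.single i 1 + Finsupp.single j 1)
          ((C ((A t j : ℤ)) * (f * X t)) * X j)
        = if t = i then A i j * constantCoeff f else 0 := by
      intro t _
      rw [coeff_pair_mul_X _ _ _ _ hik.ne, if_neg hik.ne', if_pos rfl, coeff_C_mul,
        coeff_single_mul_X]
      by_cases hti : t = i
      · subst hti; rw [if_pos rfl, if_pos rfl]
      · rw [if_neg hti, if_neg hti, mul_zero]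
    rw [Finset.sum_congr rfl hsum, Finset.sum_ite_eq' (Finset.Iio j) i,
      if_pos (Finset.mem_Iio.mpr hik), if_pos rfl]
    ring
  · rw [if_neg hjk]
    by_cases hji : j = i
    · subst hji
      rw [if_pos rfl, coeff_single_mul_X, if_neg hjk]
      have hsum : ∀ t ∈ Finset.Iio j,
          coeff (Finsupp.single j 1 + Finsupp.single k 1)
            ((C ((A t j : ℤ)) * (f * X t)) * X j) = 0 := by
        intro t ht
        rw [coeff_pair_mul_X _ _ _ _ hik.ne, if_pos rfl, coeff_C_mul, coeff_single_mul_X,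
          if_neg (show t ≠ k from (lt_trans (Finset.mem_Iio.mp ht) hik).ne), mul_zero]
      rw [Finset.sum_congr rfl hsum, Finset.sum_const_zero]
      simp [hjk]
    · rw [if_neg hji, if_neg hjk]
      have hsum : ∀ t ∈ Finset.Iio j,
          coeff (Finsupp.single i 1 + Finsupp.single k 1)
            ((C ((A t j : ℤ)) * (f * X t)) * X j) = 0 := by
        intro t _
        rw [coeff_pair_mul_X _ _ _ _ hik.ne, if_neg hji, if_neg hjk]
      rw [Finset.sum_congr rfl hsum, Finset.sum_const_zero]
      simp [hjk]

lemma coeff_double_mul_rel (A : Matrix (Fin n) (Fin n) ℤ) (f : MvPolynomial (Fin n) ℤ)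
    (k j : Fin n) :
    coeff (Finsupp.single k 2) (f * bottRel ℤ A j) =
      if j = k then constantCoeff f else 0 := by
  have hexp : f * bottRel ℤ A j =
      (f * X j) * X j - ∑ t ∈ Finset.Iio j, (C ((A t j : ℤ)) * (f * X t)) * X j := by
    rw [bottRel, mul_sub]
    congr 1
    · ring
    · rw [Finset.sum_mul, Finset.mul_sum]
      refine Finset.sum_congr rfl fun t _ => by push_cast; ring
  rw [hexp, coeff_sub, coeff_sum]
  rw [coeff_double_mul_X]
  by_cases hjk : j = k
  · subst hjk
    rw [if_pos rfl, coeff_single_mul_X, if_pos rfl]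
    have hsum : ∀ t ∈ Finset.Iio j,
        coeff (Finsupp.single j 2) ((C ((A t j : ℤ)) * (f * X t)) * X j) = 0 := by
      intro t ht
      rw [coeff_double_mul_X, if_pos rfl, coeff_C_mul, coeff_single_mul_X,
        if_neg (show t ≠ j from (Finset.mem_Iio.mp ht).ne), mul_zero]
    rw [Finset.sum_congr rfl hsum, Finset.sum_const_zero]
    simp
  · rw [if_neg hjk]
    have hsum : ∀ t ∈ Finset.Iio j,
        coeff (Finsupp.single k 2) ((C ((A t j : ℤ)) * (f * X t)) * X j) = 0 := by
      intro t _
      rw [coeff_double_mul_X, if_neg hjk]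
    rw [Finset.sum_congr rfl hsum, Finset.sum_const_zero]
    simp [hjk]


lemma key_identity (A : Matrix (Fin n) (Fin n) ℤ) (c d : Fin n → ℤ)
    (f : Fin n → MvPolynomial (Fin n) ℤ)
    (hF : ∑ j, f j * bottRel ℤ A j = L c * L d) (i k : Fin n) (hik : i < k) :
    c i * d k + c k * d i = -(A i k) * (c k * d k) := by
  have h1 := congrArg (coeff (Finsupp.single i 1 + Finsupp.single k 1)) hF
  have h2 := congrArg (coeff (Finsupp.single k 2)) hF
  rw [coeff_sum, coeff_pair_LL _ _ _ _ hik.ne,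
    Finset.sum_congr rfl (fun j _ => coeff_pair_mul_rel A (f j) i k j hik),
    Finset.sum_ite_eq' Finset.univ k, if_pos (Finset.mem_univ k)] at h1
  rw [coeff_sum, coeff_double_LL,
    Finset.sum_congr rfl (fun j _ => coeff_double_mul_rel A (f j) k j),
    Finset.sum_ite_eq' Finset.univ k, if_pos (Finset.mem_univ k)] at h2
  rw [h2] at h1
  linarith

end PVP

namespace PVP

variable (A : Matrix (Fin n) (Fin n) ℤ)

lemma mk_L (c : Fin n → ℤ) :
    Ideal.Quotient.mk (bottIdeal ℤ A) (L c) = ∑ i, c i • bx ℤ A i := by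
  rw [L, map_sum]
  refine Finset.sum_congr rfl fun i _ => ?_
  rw [map_mul, hom_C, zsmul_eq_mul]
  rfl

lemma balpha_eq (j : Fin n) :
    balpha ℤ A j = ∑ i ∈ Finset.Iio j, (A i j) • bx ℤ A i := by
  rw [balpha, map_sum]
  refine Finset.sum_congr rfl fun i _ => ?_
  rw [map_mul, hom_C, zsmul_eq_mul]
  rfl

lemma bx_sq (j : Fin n) : bx ℤ A j ^ 2 = balpha ℤ A j * bx ℤ A j := by
  have hmem : bottRel ℤ A j ∈ bottIdeal ℤ A := Ideal.subset_span ⟨j, rfl⟩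
  have h0 : Ideal.Quotient.mk (bottIdeal ℤ A) (bottRel ℤ A j) = 0 :=
    Ideal.Quotient.eq_zero_iff_mem.mpr hmem
  rw [bottRel, map_sub, map_pow, map_mul, sub_eq_zero] at h0
  exact h0

end PVP

set_option maxHeartbeats 2000000 in
/-- structure of primitive vanishing pairs in degree 2. -/
theorem primitive_vanishing_pair (n : ℕ) (A : Matrix (Fin n) (Fin n) ℤ)
    (hA : StrictUpper A) (c d : Fin n → ℤ)
    (hc : Finset.univ.gcd c = 1) (hd : Finset.univ.gcd d = 1)
    (h : (∑ i, c i • bx ℤ A i) * (∑ i, d i • bx ℤ A i) = 0) :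
    ∃ (j : Fin n) (a : ℤ) (e : Fin n → ℤ), a ≠ 0 ∧ (∀ i, j ≤ i → e i = 0) ∧
      (∑ i, e i • bx ℤ A i) * ((∑ i, e i • bx ℤ A i) + a • balpha ℤ A j) = 0 ∧
      (∑ i, c i • bx ℤ A i) = a • bx ℤ A j + ∑ i, e i • bx ℤ A i ∧
      ((∑ i, d i • bx ℤ A i) = a • (bx ℤ A j - balpha ℤ A j) - ∑ i, e i • bx ℤ A i ∨
       (∑ i, d i • bx ℤ A i) = -(a • (bx ℤ A j - balpha ℤ A j)) + ∑ i, e i • bx ℤ A i) := by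
  classical
  -- Step A: polynomial membership and the key coefficient identities
  have hPmem : PVP.L c * PVP.L d ∈ bottIdeal ℤ A := by
    rw [← Ideal.Quotient.eq_zero_iff_mem, map_mul, PVP.mk_L, PVP.mk_L]
    exact h
  have hPmem' : PVP.L c * PVP.L d ∈ Submodule.span (MvPolynomial (Fin n) ℤ)
      (Set.range (bottRel ℤ A)) := hPmem
  obtain ⟨f, hF⟩ := (Submodule.mem_span_range_iff_exists_fun (MvPolynomial (Fin n) ℤ)).mp hPmem'
  have hF' : ∑ j, f j * bottRel ℤ A j = PVP.L c * PVP.L d := by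
    simpa [smul_eq_mul] using hF
  have key : ∀ i k : Fin n, i < k → c i * d k + c k * d i = -(A i k) * (c k * d k) :=
    fun i k hik => PVP.key_identity A c d f hF' i k hik
  -- Step B: the top index j
  have hgcd0 : ∀ (e : Fin n → ℤ), Finset.univ.gcd e = 1 → (∀ i, e i = 0) → False := by
    intro e he hall
    have h0 : Finset.univ.gcd e = 0 := Finset.gcd_eq_zero_iff.mpr fun i _ => hall i
    rw [he] at h0; exact one_ne_zero h0
  have hcne : ∃ t, c t ≠ 0 := by
    by_contra hall
    push_neg at hall
    exact hgcd0 c hc hall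
  set S : Finset (Fin n) := Finset.univ.filter (fun t => c t ≠ 0 ∨ d t ≠ 0) with hSdef
  have hSne : S.Nonempty := by
    obtain ⟨t, ht⟩ := hcne
    exact ⟨t, Finset.mem_filter.mpr ⟨Finset.mem_univ t, Or.inl ht⟩⟩
  set j := S.max' hSne with hjdef
  have hjor : c j ≠ 0 ∨ d j ≠ 0 := (Finset.mem_filter.mp (S.max'_mem hSne)).2
  have htop : ∀ i : Fin n, j < i → c i = 0 ∧ d i = 0 := by
    intro i hi
    by_contra hcon
    have hiS : i ∈ S := Finset.mem_filter.mpr ⟨Finset.mem_univ i, by tauto⟩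
    exact absurd (S.le_max' i hiS) (not_le.mpr hi)
  have ha : c j ≠ 0 := by
    intro ha0
    have hbne : d j ≠ 0 := by
      rcases hjor with h1 | h1
      · exact absurd ha0 h1
      · exact h1
    refine hgcd0 c hc fun i => ?_
    rcases lt_trichotomy i j with hij | rfl | hij
    · have hk := key i j hij
      rw [ha0] at hk
      have h0 : c i * d j = 0 := by linarith
      exact (mul_eq_zero.mp h0).resolve_right hbne
    · exact ha0
    · exact (htop i hij).1
  have hb : d j ≠ 0 := by
    intro hb0
    refine hgcd0 d hd fun i => ?_
    rcases lt_trichotomy i j with hij | rfl | hij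
    · have hk := key i j hij
      rw [hb0] at hk
      have h0 : c j * d i = 0 := by linarith
      exact (mul_eq_zero.mp h0).resolve_left ha
    · exact hb0
    · exact (htop i hij).2
  -- Step C: integer structure
  set a := c j with hadef
  set b := d j with hbdef
  set z : Fin n → ℤ := fun i => if i < j then -(a * A i j) - c i else if i = j then a else 0
    with hzdef
  have hz : ∀ i, a * d i = b * z i := by
    intro i
    rcases lt_trichotomy i j with hij | rfl | hij
    · have hk := key i j hij
      simp only [hzdef, if_pos hij]
      linear_combination hk
    · rw [show z j = a by simp [hzdef]]
      ring
    · rw [(htop i hij).2]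
      simp only [hzdef]
      rw [if_neg (not_lt.mpr hij.le), if_neg (ne_of_gt hij)]
      ring
  set g : ℤ := (Int.gcd a b : ℤ) with hgdef
  have hgpos : 0 < Int.gcd a b := Int.gcd_pos_of_ne_zero_left b ha
  have hgne : g ≠ 0 := by
    rw [hgdef]
    exact_mod_cast hgpos.ne'
  set a' := a / g with ha'def
  set b' := b / g with hb'def
  have ha' : a' * g = a := Int.ediv_mul_cancel (Int.gcd_dvd_left a b)
  have hb' : b' * g = b := Int.ediv_mul_cancel (Int.gcd_dvd_right a b)
  have hcop : IsCoprime a' b' := by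
    rw [Int.isCoprime_iff_gcd_eq_one]
    exact Int.gcd_div_gcd_div_gcd hgpos
  have hz' : ∀ i, a' * d i = b' * z i := by
    intro i
    have h1 := hz i
    rw [← ha', ← hb'] at h1
    have h2 : g * (a' * d i) = g * (b' * z i) := by linarith
    exact mul_left_cancel₀ hgne h2
  have hb'unit : b' = 1 ∨ b' = -1 := by
    have hdvd : ∀ i, b' ∣ d i := fun i =>
      hcop.symm.dvd_of_dvd_mul_left ⟨z i, hz' i⟩
    have h1 : b' ∣ Finset.univ.gcd d := Finset.dvd_gcd fun i _ => hdvd i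
    rw [hd] at h1
    exact Int.isUnit_iff.mp (isUnit_of_dvd_one h1)
  have ha'unit : a' = 1 ∨ a' = -1 := by
    have hzdvd : ∀ i, a' ∣ z i := fun i =>
      hcop.dvd_of_dvd_mul_left ⟨d i, (hz' i).symm⟩
    have hdvd : ∀ i, a' ∣ c i := by
      intro i
      rcases lt_trichotomy i j with hij | rfl | hij
      · have hci : c i = -(a * A i j) - z i := by
          have := hzdef
          simp only [hzdef, if_pos hij]
          ring
        rw [hci]
        have haa : a' ∣ a := ⟨g, ha'.symm⟩
        exact dvd_sub (dvd_neg.mpr (haa.mul_right (A i j))) (hzdvd i)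
      · exact ⟨g, ha'.symm⟩
      · rw [(htop i hij).1]
        exact dvd_zero a'
    have h1 : a' ∣ Finset.univ.gcd c := Finset.dvd_gcd fun i _ => hdvd i
    rw [hc] at h1
    exact Int.isUnit_iff.mp (isUnit_of_dvd_one h1)
  set ε : ℤ := a' * b' with hεdef
  have hε : ε = 1 ∨ ε = -1 := by
    rcases ha'unit with h1 | h1 <;> rcases hb'unit with h2 | h2 <;>
      rw [hεdef, h1, h2] <;> norm_num
  have hb_eq : b = ε * a := by
    have h3 : a' * a' = 1 := by rcases ha'unit with h1 | h1 <;> rw [h1] <;> norm_num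
    calc b = 1 * b := (one_mul b).symm
    _ = (a' * a') * b := by rw [h3]
    _ = ε * a := by rw [hεdef, ← ha', ← hb']; ring
  have hd_eq : ∀ i, d i = ε * z i := by
    intro i
    refine mul_left_cancel₀ ha ?_
    have h1 := hz i
    rw [hb_eq] at h1
    calc c j * d i = a * d i := by rw [← hadef]
    _ = ε * a * z i := h1
    _ = c j * (ε * z i) := by rw [← hadef]; ring
  -- Step D: assemble
  set e : Fin n → ℤ := fun i => if i < j then c i else 0 with hedef
  have hIio : ∀ (G : Fin n → BottRing ℤ A),
      ∑ i ∈ Finset.Iio j, G i = ∑ i, if i < j then G i else 0 := by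
    intro G
    rw [show Finset.Iio j = Finset.univ.filter (fun i => i < j) by ext x; simp]
    exact Finset.sum_filter _ _
  have hbal : a • balpha ℤ A j = ∑ i, (if i < j then a * A i j else 0) • bx ℤ A i := by
    rw [PVP.balpha_eq, hIio (fun i => A i j • bx ℤ A i), Finset.smul_sum]
    refine Finset.sum_congr rfl fun i _ => ?_
    split_ifs with h1
    · rw [smul_smul]
    · simp
  have hU : (∑ i, c i • bx ℤ A i) = a • bx ℤ A j + ∑ i, e i • bx ℤ A i := by
    have hci : ∀ i, c i = (if i = j then a else 0) + e i := by
      intro i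
      rcases lt_trichotomy i j with hij | rfl | hij
      · simp [hedef, hij, hij.ne]
      · simp [hedef, lt_irrefl, hadef]
      · simp [hedef, hij.ne', not_lt.mpr hij.le, (htop i hij).1]
    calc ∑ i, c i • bx ℤ A i
        = ∑ i, ((if i = j then a • bx ℤ A i else 0) + e i • bx ℤ A i) := by
          refine Finset.sum_congr rfl fun i _ => ?_
          rw [show c i • bx ℤ A i = ((if i = j then a else 0) + e i) • bx ℤ A i by
            rw [← hci i]]
          rw [add_smul, ite_smul, zero_smul]
    _ = (∑ i, if i = j then a • bx ℤ A i else 0) + ∑ i, e i • bx ℤ A i :=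
          Finset.sum_add_distrib
    _ = a • bx ℤ A j + ∑ i, e i • bx ℤ A i := by
          rw [Finset.sum_ite_eq' Finset.univ j, if_pos (Finset.mem_univ j)]
  have hVz : ∑ i, z i • bx ℤ A i
      = a • bx ℤ A j - a • balpha ℤ A j - ∑ i, e i • bx ℤ A i := by
    have hzi : ∀ i, z i • bx ℤ A i
        = (if i = j then a • bx ℤ A i else 0)
          + (-((if i < j then a * A i j else 0) • bx ℤ A i) + -(e i • bx ℤ A i)) := by
      intro i
      rcases lt_trichotomy i j with hij | rfl | hij
      · rw [if_neg hij.ne, if_pos hij]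
        simp only [hzdef, hedef, if_pos hij]
        rw [zero_add, ← neg_smul, ← neg_smul, ← add_smul]
        congr 1
        try ring
      · rw [if_pos rfl, if_neg (lt_irrefl j)]
        simp [hzdef, hedef]
      · rw [if_neg hij.ne', if_neg (not_lt.mpr hij.le)]
        simp [hzdef, hedef, not_lt.mpr hij.le, hij.ne']
    rw [Finset.sum_congr rfl (fun i _ => hzi i), Finset.sum_add_distrib,
      Finset.sum_add_distrib, Finset.sum_neg_distrib, Finset.sum_neg_distrib,
      Finset.sum_ite_eq' Finset.univ j, if_pos (Finset.mem_univ j), ← hbal]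
    ring
  have hV : ∑ i, d i • bx ℤ A i
      = ε • (a • bx ℤ A j - a • balpha ℤ A j - ∑ i, e i • bx ℤ A i) := by
    rw [← hVz, Finset.smul_sum]
    refine Finset.sum_congr rfl fun i _ => ?_
    rw [hd_eq i, mul_smul]
  refine ⟨j, a, e, ha, ?_, ?_, hU, ?_⟩
  · intro i hji
    simp [hedef, not_lt.mpr hji]
  · -- quadratic relation
    have hsq := PVP.bx_sq A j
    have h' := h
    rw [hU, hV] at h'
    rcases hε with h1 | h1
    · rw [h1, one_smul] at h'
      simp only [zsmul_eq_mul] at h' hsq ⊢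
      linear_combination (-1 : BottRing ℤ A) * h' + ((a : BottRing ℤ A))^2 * hsq
    · rw [h1, neg_one_smul] at h'
      simp only [zsmul_eq_mul] at h' hsq ⊢
      linear_combination h' + ((a : BottRing ℤ A))^2 * hsq
  · rcases hε with h1 | h1
    · left
      rw [hV, h1, one_smul, smul_sub]
    · right
      rw [hV, h1, neg_one_smul, smul_sub]
      ring

end
end

section
/- In H ⊗ ℚ = ℚ[x₁,…,xₙ]/(x_j² − α_j x_j), with y_j = x_j − (1/2)α_j and a^i_j the entries of (E − (1/2)A)^{-1}, the relation y_j² = (Σ_{i<j} a^i_j y_i)² holds for every j. -/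
open MvPolynomial

noncomputable section

variable {n : ℕ}

section Aux

variable {n : ℕ}

/-- the matrix `E - (1/2)A` over ℚ -/
def bmat (A : Matrix (Fin n) (Fin n) ℤ) : Matrix (Fin n) (Fin n) ℚ :=
  (1 : Matrix (Fin n) (Fin n) ℚ) - (2⁻¹ : ℚ) • A.map (Int.cast : ℤ → ℚ)

lemma mk_smul (A : Matrix (Fin n) (Fin n) ℤ) (a : ℚ) (p : MvPolynomial (Fin n) ℚ) :
    Ideal.Quotient.mk (bottIdeal ℚ A) (a • p) = a • Ideal.Quotient.mk (bottIdeal ℚ A) p := by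
  rw [← Ideal.Quotient.mkₐ_eq_mk ℚ, map_smul]

lemma bx_sq (A : Matrix (Fin n) (Fin n) ℤ) (j : Fin n) :
    bx ℚ A j ^ 2 = balpha ℚ A j * bx ℚ A j := by
  have h : Ideal.Quotient.mk (bottIdeal ℚ A) (bottRel ℚ A j) = 0 := by
    rw [Ideal.Quotient.eq_zero_iff_mem]
    exact Ideal.subset_span ⟨j, rfl⟩
  unfold bottRel at h
  rw [map_sub, map_pow, map_mul, sub_eq_zero] at h
  exact h

lemma yq_eq_sum (A : Matrix (Fin n) (Fin n) ℤ) (hA : StrictUpper A) (i : Fin n) :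
    yq A i = ∑ k : Fin n, bmat A k i • bx ℚ A k := by
  have hsum : balpha ℚ A i = ∑ k : Fin n, ((A k i : ℚ)) • bx ℚ A k := by
    unfold balpha bx
    rw [show (∑ k ∈ Finset.Iio i, C ((A k i : ℚ)) * X k) =
        ∑ k : Fin n, ((A k i : ℚ)) • X k from ?_, map_sum]
    · exact Finset.sum_congr rfl fun k _ => mk_smul A _ _
    · rw [Finset.sum_congr rfl (fun k _ => (MvPolynomial.smul_eq_C_mul _ _ : _))]
      apply Finset.sum_subset (Finset.subset_univ _)
      intro k _ hk
      have : A k i = 0 := hA k i (by simpa [Finset.mem_Iio, not_lt] using hk)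
      simp [this]
  have hterm : ∀ k : Fin n, bmat A k i • bx ℚ A k =
      (if k = i then bx ℚ A k else 0) - ((2⁻¹ : ℚ) * (A k i : ℚ)) • bx ℚ A k := by
    intro k
    rw [bmat, Matrix.sub_apply, Matrix.one_apply, Matrix.smul_apply, Matrix.map_apply,
      sub_smul, smul_eq_mul, ite_smul, one_smul, zero_smul]
  rw [Finset.sum_congr rfl fun k _ => hterm k, Finset.sum_sub_distrib,
    Finset.sum_ite_eq' Finset.univ i]
  unfold yq
  rw [if_pos (Finset.mem_univ i)]
  congr 1
  rw [hsum, Finset.smul_sum]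
  exact Finset.sum_congr rfl fun k _ => smul_smul _ _ _

lemma bmat_blockTriangular (A : Matrix (Fin n) (Fin n) ℤ) (hA : StrictUpper A) :
    (bmat A).BlockTriangular id := by
  intro i j hij
  have h0 : A i j = 0 := hA i j (le_of_lt hij)
  have hne : i ≠ j := Ne.symm (ne_of_lt hij)
  simp [bmat, Matrix.one_apply, h0, hne]

lemma bmat_det (A : Matrix (Fin n) (Fin n) ℤ) (hA : StrictUpper A) : (bmat A).det = 1 := by
  rw [Matrix.det_of_upperTriangular (bmat_blockTriangular A hA)]
  apply Finset.prod_eq_one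
  intro i _
  simp [bmat, Matrix.one_apply, hA i i (le_refl i)]

end Aux

/-- `y_j² = (∑_{i<j} a^i_j y_i)²` in `H ⊗ ℚ`. -/
theorem y_sq_relation (n : ℕ) (A : Matrix (Fin n) (Fin n) ℤ) (hA : StrictUpper A)
    (j : Fin n) :
    yq A j ^ 2 = (∑ i ∈ Finset.Iio j, ainv A i j • yq A i) ^ 2 := by
  have hainv : ainv A = (bmat A)⁻¹ := rfl
  have hu : IsUnit (bmat A).det := by rw [bmat_det A hA]; exact isUnit_one
  haveI : Invertible (bmat A) := (bmat A).invertibleOfIsUnitDet hu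
  have hinvT : ((bmat A)⁻¹).BlockTriangular id :=
    Matrix.blockTriangular_inv_of_blockTriangular (bmat_blockTriangular A hA)
  have hBB : bmat A * ainv A = 1 := by rw [hainv]; exact (bmat A).mul_nonsing_inv hu
  have hBA : ainv A * bmat A = 1 := by rw [hainv]; exact (bmat A).nonsing_inv_mul hu
  -- the full sum gives x_j
  have key : ∑ i : Fin n, ainv A i j • yq A i = bx ℚ A j := by
    calc ∑ i : Fin n, ainv A i j • yq A i
        = ∑ i : Fin n, ∑ k : Fin n, (bmat A k i * ainv A i j) • bx ℚ A k := by
          refine Finset.sum_congr rfl fun i _ => ?_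
          rw [yq_eq_sum A hA i, Finset.smul_sum]
          exact Finset.sum_congr rfl fun k _ => by rw [smul_smul, mul_comm]
      _ = ∑ k : Fin n, ∑ i : Fin n, (bmat A k i * ainv A i j) • bx ℚ A k :=
          Finset.sum_comm
      _ = ∑ k : Fin n, ((bmat A * ainv A) k j) • bx ℚ A k := by
          refine Finset.sum_congr rfl fun k _ => ?_
          rw [Matrix.mul_apply, Finset.sum_smul]
      _ = bx ℚ A j := by
          rw [hBB]
          rw [Finset.sum_eq_single j (fun k _ hk => by
            simp [Matrix.one_apply, hk]) (by simp)]
          simp [Matrix.one_apply]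
  -- diagonal entry of the inverse is 1
  have hdiagB : bmat A j j = 1 := by
    simp [bmat, Matrix.one_apply, hA j j (le_refl j)]
  have hdiag : ainv A j j = 1 := by
    have h1 : (ainv A * bmat A) j j = 1 := by rw [hBA]; simp [Matrix.one_apply]
    rw [Matrix.mul_apply] at h1
    rw [Finset.sum_eq_single j (fun k _ hk => ?_) (by simp)] at h1
    · rw [hdiagB, mul_one] at h1; exact h1
    · rcases lt_or_gt_of_ne hk with h | h
      · rw [hainv, hinvT h, zero_mul]
      · rw [bmat_blockTriangular A hA h, mul_zero]
  -- the partial sum gives (1/2) α_j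
  have hsum2 : ∑ i ∈ Finset.Iio j, ainv A i j • yq A i = (2⁻¹ : ℚ) • balpha ℚ A j := by
    have hsubset : insert j (Finset.Iio j) ⊆ Finset.univ := Finset.subset_univ _
    have hext : ∑ i ∈ insert j (Finset.Iio j), ainv A i j • yq A i
        = ∑ i : Fin n, ainv A i j • yq A i := by
      apply Finset.sum_subset hsubset
      intro i _ hi
      have hij : j < i := by
        rcases Finset.mem_insert.not.mp hi with h
        push_neg at h
        exact lt_of_le_of_ne (not_lt.mp (by simpa [Finset.mem_Iio] using h.2)) (Ne.symm h.1)
      rw [hainv, hinvT hij, zero_smul]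
    rw [Finset.sum_insert (by simp), key, hdiag, one_smul] at hext
    have : ∑ i ∈ Finset.Iio j, ainv A i j • yq A i = bx ℚ A j - yq A j := by
      rw [← hext]; ring
    rw [this]
    unfold yq
    rw [sub_sub_cancel]
  rw [hsum2]
  have h := bx_sq A j
  have hc : (2 : BottRing ℚ A) * (algebraMap ℚ (BottRing ℚ A)) 2⁻¹ = 1 := by
    rw [show (2 : BottRing ℚ A) = (algebraMap ℚ (BottRing ℚ A)) 2 from by
      rw [map_ofNat], ← map_mul]
    norm_num
  unfold yq
  have hs : ∀ z : BottRing ℚ A, (2⁻¹ : ℚ) • z = (algebraMap ℚ (BottRing ℚ A)) 2⁻¹ * z := by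
    intro z
    obtain ⟨p, rfl⟩ := Ideal.Quotient.mk_surjective z
    rw [← mk_smul A, Algebra.smul_def, map_mul, Ideal.Quotient.mk_algebraMap]
  rw [hs]
  linear_combination h - balpha ℚ A j * bx ℚ A j * hc

end
end

section
/- Let ψ : H(A) → H(B) be a graded ring isomorphism between integral cohomology rings of Bott manifolds M(A), M(B), inducing on rational cohomology ψ(y^A_j) = q_j y^B_{σ(j)} for nonzero rationals q_j and a permutation σ. Then each q_j belongs to {±1/2, ±1, ±2}; moreover q_j ∈ {±1/2} if and only if α^A_j ≢ 0 (mod 2) and α^B_{σ(j)} ≡ 0 (mod 2), and q_j ∈ {±2} if and only if α^A_j ≡ 0 (mod 2) and α^B_{σ(j)} ≢ 0 (mod 2). -/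
set_option maxHeartbeats 1000000
set_option synthInstance.maxHeartbeats 400000


open MvPolynomial

noncomputable section

variable {n : ℕ}

lemma bottRel_hom (A : Matrix (Fin n) (Fin n) ℤ) (j : Fin n) :
    (bottRel ℤ A j).IsHomogeneous 2 := by
  unfold bottRel
  apply MvPolynomial.IsHomogeneous.sub
  · simpa using (isHomogeneous_X ℤ j).pow 2
  · have h1 : (∑ i ∈ Finset.Iio j, C ((A i j : ℤ)) * X i).IsHomogeneous 1 := by
      apply MvPolynomial.IsHomogeneous.sum
      intro i _
      simpa using (isHomogeneous_C (Fin n) ((A i j : ℤ))).mul (isHomogeneous_X ℤ i)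
    simpa using h1.mul (isHomogeneous_X ℤ j)

lemma degree_single (i : Fin n) : (Finsupp.single i (1:ℕ)).degree = 1 := by
  simp [Finsupp.degree_eq_weight_one, Finsupp.weight_apply, Finsupp.sum_single_index]

lemma mem_coeff_aux {A : Matrix (Fin n) (Fin n) ℤ} {p : MvPolynomial (Fin n) ℤ}
    (hp : p ∈ bottIdeal ℤ A) : ∀ d : Fin n →₀ ℕ, d.degree < 2 → coeff d p = 0 := by
  refine Submodule.span_induction ?_ ?_ ?_ ?_ hp
  · rintro x ⟨j, rfl⟩ d hd
    exact (bottRel_hom A j).coeff_eq_zero (by omega)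
  · simp
  · intro x y _ _ hx hy d hd
    simp [coeff_add, hx d hd, hy d hd]
  · intro a x _ hx d hd
    rw [smul_eq_mul, coeff_mul]
    apply Finset.sum_eq_zero
    rintro ⟨a1, b1⟩ hab
    have hab' : a1 + b1 = d := Finset.HasAntidiagonal.mem_antidiagonal.mp hab
    have hdeg : b1.degree ≤ d.degree := by
      rw [← hab']
      simp [Finsupp.degree_eq_weight_one, map_add]
    rw [hx b1 (lt_of_le_of_lt hdeg hd), mul_zero]

lemma coeff_eq_of_mk_eq {A : Matrix (Fin n) (Fin n) ℤ} {p p' : MvPolynomial (Fin n) ℤ}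
    (h : Ideal.Quotient.mk (bottIdeal ℤ A) p = Ideal.Quotient.mk (bottIdeal ℤ A) p')
    (i : Fin n) : coeff (Finsupp.single i 1) p = coeff (Finsupp.single i 1) p' := by
  have h2 := mem_coeff_aux (Ideal.Quotient.eq.mp h) (Finsupp.single i 1)
    (by rw [degree_single]; omega)
  rw [coeff_sub] at h2
  linarith

def tpoly (A : Matrix (Fin n) (Fin n) ℤ) (j : Fin n) : MvPolynomial (Fin n) ℤ :=
  (2:ℤ) • X j - ∑ i ∈ Finset.Iio j, C ((A i j : ℤ)) * X i

lemma mk_tpoly (A : Matrix (Fin n) (Fin n) ℤ) (j : Fin n) :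
    Ideal.Quotient.mk (bottIdeal ℤ A) (tpoly A j) = ty A j := by
  unfold tpoly ty bx balpha
  rw [map_sub, map_zsmul]
  norm_num

def tcoef (A : Matrix (Fin n) (Fin n) ℤ) (j i : Fin n) : ℤ :=
  (if i = j then 2 else 0) - (if i < j then A i j else 0)

lemma coeff_tpoly (A : Matrix (Fin n) (Fin n) ℤ) (j i : Fin n) :
    coeff (Finsupp.single i 1) (tpoly A j) = tcoef A j i := by
  unfold tpoly tcoef
  rw [coeff_sub, coeff_smul, coeff_sum]
  have hX : ∀ k : Fin n, coeff (Finsupp.single i 1) (X k : MvPolynomial (Fin n) ℤ)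
      = if k = i then 1 else 0 := by
    intro k
    rw [coeff_X']
    simp [Finsupp.single_left_inj (one_ne_zero)]
  have : ∀ k ∈ Finset.Iio j, coeff (Finsupp.single i 1) (C ((A k j : ℤ)) * X k)
      = if k = i then A k j else 0 := by
    intro k _
    rw [coeff_C_mul, hX]
    split <;> simp
  rw [Finset.sum_congr rfl this, Finset.sum_ite_eq' (Finset.Iio j) i (fun k => A k j)]
  rw [hX]
  simp only [Finset.mem_Iio, smul_eq_mul]
  by_cases h : i = j
  · subst h; simp
  · rw [if_neg h, if_neg (fun hh : j = i => h hh.symm)]; ring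

lemma tcoef_self (A : Matrix (Fin n) (Fin n) ℤ) (j : Fin n) : tcoef A j j = 2 := by
  simp [tcoef]

lemma tcoef_lt (A : Matrix (Fin n) (Fin n) ℤ) {j i : Fin n} (h : i < j) :
    tcoef A j i = - A i j := by
  simp [tcoef, h, ne_of_lt h]

/-- if `z = c • (mk g)` and `mk p = z` then `c ∣` each linear coefficient of `p` -/
lemma dvd_coeff_of_smul {A : Matrix (Fin n) (Fin n) ℤ} {p : MvPolynomial (Fin n) ℤ}
    {z : BottRing ℤ A} (hz : Ideal.Quotient.mk (bottIdeal ℤ A) p = z)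
    {c : ℤ} (h : ∃ u, z = c • u) (i : Fin n) : c ∣ coeff (Finsupp.single i 1) p := by
  obtain ⟨u, hu⟩ := h
  obtain ⟨g, hg⟩ := Ideal.Quotient.mk_surjective (I := bottIdeal ℤ A) u
  have : Ideal.Quotient.mk (bottIdeal ℤ A) p = Ideal.Quotient.mk (bottIdeal ℤ A) (c • g) := by
    rw [map_zsmul, hg, hz, hu]
  have h2 := coeff_eq_of_mk_eq this i
  rw [coeff_smul, smul_eq_mul] at h2
  exact ⟨_, h2⟩

/-- `EvenAlpha A j` iff `ty A j` is divisible by 2 in the ring -/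
lemma even_iff_dvd (A : Matrix (Fin n) (Fin n) ℤ) (j : Fin n) :
    EvenAlpha A j ↔ ∃ u, ty A j = (2:ℤ) • u := by
  constructor
  · intro h
    refine ⟨Ideal.Quotient.mk (bottIdeal ℤ A)
      (X j - ∑ i ∈ Finset.Iio j, C ((A i j) / 2) * X i), ?_⟩
    rw [← map_zsmul, ← mk_tpoly]
    congr 1
    unfold tpoly
    rw [smul_sub, Finset.smul_sum]
    congr 1
    apply Finset.sum_congr rfl
    intro i hi
    rw [smul_eq_C_mul, ← mul_assoc, ← C_mul]
    congr 2
    exact (Int.mul_ediv_cancel' (h i (Finset.mem_Iio.mp hi))).symm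
  · intro h i hij
    have hd := dvd_coeff_of_smul (mk_tpoly A j) h i
    rw [coeff_tpoly, tcoef_lt A hij] at hd
    exact (dvd_neg.mp hd)

/-- for an integral graded isomorphism with `ψ(y^A_j) = q_j y^B_{σ(j)}`
(expressed integrally via `2y = 2x − α`), each `q_j ∈ {±1/2, ±1, ±2}`, with the stated
characterizations of `q_j = ±1/2` and `q_j = ±2`. -/
theorem q_values (n : ℕ) (A B : Matrix (Fin n) (Fin n) ℤ)
    (hA : StrictUpper A) (hB : StrictUpper B)
    (ψ : BottRing ℤ A ≃+* BottRing ℤ B) (hψ : IsGradedIso ψ)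
    (q : Fin n → ℚ) (σ : Equiv.Perm (Fin n)) (hq0 : ∀ j, q j ≠ 0)
    (hqy : ∀ j : Fin n, ((q j).den : ℤ) • ψ (ty A j) = (q j).num • ty B (σ j)) :
    ∀ j : Fin n,
      (q j = 2⁻¹ ∨ q j = -2⁻¹ ∨ q j = 1 ∨ q j = -1 ∨ q j = 2 ∨ q j = -2) ∧
      ((q j = 2⁻¹ ∨ q j = -2⁻¹) ↔ (¬ EvenAlpha A j ∧ EvenAlpha B (σ j))) ∧
      ((q j = 2 ∨ q j = -2) ↔ (EvenAlpha A j ∧ ¬ EvenAlpha B (σ j))) := by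
  intro j
  set dn : ℤ := ((q j).den : ℤ) with hdn
  set mn : ℤ := (q j).num with hmn
  have hd0 : 0 < dn := by rw [hdn]; exact_mod_cast (q j).pos
  have hm0 : mn ≠ 0 := Rat.num_ne_zero.mpr (hq0 j)
  have hgcd : Int.gcd mn dn = 1 := by
    rw [hmn, hdn]
    simpa [Int.gcd] using (q j).reduced
  have hcop : IsCoprime mn dn := Int.isCoprime_iff_gcd_eq_one.mpr hgcd
  have hq := hqy j
  rw [← hdn, ← hmn] at hq
  -- lift ψ (ty A j)
  obtain ⟨p, hp⟩ := Ideal.Quotient.mk_surjective (I := bottIdeal ℤ B) (ψ (ty A j))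
  have hmkB : Ideal.Quotient.mk (bottIdeal ℤ B) (dn • p)
      = Ideal.Quotient.mk (bottIdeal ℤ B) (mn • tpoly B (σ j)) := by
    rw [map_zsmul, map_zsmul, hp, mk_tpoly]
    exact hq
  have hc : ∀ i, dn * coeff (Finsupp.single i 1) p = mn * tcoef B (σ j) i := by
    intro i
    have h := coeff_eq_of_mk_eq hmkB i
    rwa [coeff_smul, coeff_smul, coeff_tpoly, smul_eq_mul, smul_eq_mul] at h
  -- lift ψ.symm (ty B (σ j))
  obtain ⟨p', hp'⟩ := Ideal.Quotient.mk_surjective (I := bottIdeal ℤ A) (ψ.symm (ty B (σ j)))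
  have hq' : dn • ty A j = mn • ψ.symm (ty B (σ j)) := by
    apply ψ.injective
    rw [map_zsmul, map_zsmul, RingEquiv.apply_symm_apply]
    exact hq
  have hmkA : Ideal.Quotient.mk (bottIdeal ℤ A) (dn • tpoly A j)
      = Ideal.Quotient.mk (bottIdeal ℤ A) (mn • p') := by
    rw [map_zsmul, map_zsmul, hp', mk_tpoly]
    exact hq'
  have hc' : ∀ i, dn * tcoef A j i = mn * coeff (Finsupp.single i 1) p' := by
    intro i
    have h := coeff_eq_of_mk_eq hmkA i
    rwa [coeff_smul, coeff_smul, coeff_tpoly, smul_eq_mul, smul_eq_mul] at h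
  -- dn ∣ 2 and mn ∣ 2
  have hdd : dn ∣ 2 := by
    have h := hc (σ j)
    rw [tcoef_self] at h
    have h1 : dn ∣ mn * 2 := ⟨coeff (Finsupp.single (σ j) 1) p, by omega⟩
    exact hcop.symm.dvd_of_dvd_mul_left h1
  have hmd : mn ∣ 2 := by
    have h := hc' j
    rw [tcoef_self] at h
    have h1 : mn ∣ dn * 2 := ⟨coeff (Finsupp.single j 1) p', by omega⟩
    exact hcop.dvd_of_dvd_mul_left h1
  have hd12 : dn = 1 ∨ dn = 2 := by
    have h2 := Int.le_of_dvd (by norm_num) hdd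
    omega
  have hm4 : mn = 1 ∨ mn = -1 ∨ mn = 2 ∨ mn = -2 := by
    have h1 : (mn.natAbs : ℤ) ∣ 2 := Int.natAbs_dvd.mpr hmd
    have h2 := Int.le_of_dvd (by norm_num) h1
    omega
  -- divisibility predicate transfers
  have hDA := even_iff_dvd A j
  have hDB := even_iff_dvd B (σ j)
  have hDpsi : (∃ u, ψ (ty A j) = (2:ℤ) • u) ↔ ∃ u, ty A j = (2:ℤ) • u := by
    constructor
    · rintro ⟨u, hu⟩
      exact ⟨ψ.symm u, by apply ψ.injective; rw [map_zsmul, RingEquiv.apply_symm_apply, hu]⟩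
    · rintro ⟨u, hu⟩
      exact ⟨ψ u, by rw [hu, map_zsmul]⟩
  have hden2 : dn = 2 → (q j).den = 2 := by intro h; rw [hdn] at h; exact_mod_cast h
  have hden1 : dn = 1 → (q j).den = 1 := by intro h; rw [hdn] at h; exact_mod_cast h
  rcases hd12 with hd1 | hd2
  · -- dn = 1
    have hq1 : ψ (ty A j) = mn • ty B (σ j) := by
      rw [hd1, one_smul] at hq; exact hq
    rcases hm4 with hm | hm | hm | hm
    · -- mn = 1 : q = 1
      have hnum : (q j).num = 1 := by rw [← hmn]; exact hm
      have hqv : q j = 1 := by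
        rw [← Rat.num_div_den (q j), hnum, hden1 hd1]; norm_num
      rw [hm, one_smul] at hq1
      have hEAB : EvenAlpha A j ↔ EvenAlpha B (σ j) := by
        rw [hDA, hDB, ← hDpsi, hq1]
      refine ⟨Or.inr (Or.inr (Or.inl hqv)), ?_, ?_⟩
      · constructor
        · rintro (h|h) <;> rw [hqv] at h <;> norm_num at h
        · rintro ⟨h1, h2⟩; exact absurd (hEAB.mpr h2) h1
      · constructor
        · rintro (h|h) <;> rw [hqv] at h <;> norm_num at h
        · rintro ⟨h1, h2⟩; exact absurd (hEAB.mp h1) h2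
    · -- mn = -1 : q = -1
      have hnum : (q j).num = -1 := by rw [← hmn]; exact hm
      have hqv : q j = -1 := by
        rw [← Rat.num_div_den (q j), hnum, hden1 hd1]; norm_num
      rw [hm] at hq1
      have hiff : (∃ u, ψ (ty A j) = (2:ℤ) • u) ↔ (∃ u, ty B (σ j) = (2:ℤ) • u) := by
        constructor
        · rintro ⟨u, hu⟩
          refine ⟨-u, ?_⟩
          have : ty B (σ j) = -ψ (ty A j) := by rw [hq1]; simp
          rw [this, hu, smul_neg]
        · rintro ⟨u, hu⟩
          refine ⟨-u, ?_⟩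
          rw [hq1, hu]; simp
      have hEAB : EvenAlpha A j ↔ EvenAlpha B (σ j) := by
        rw [hDA, hDB, ← hDpsi, hiff]
      refine ⟨Or.inr (Or.inr (Or.inr (Or.inl hqv))), ?_, ?_⟩
      · constructor
        · rintro (h|h) <;> rw [hqv] at h <;> norm_num at h
        · rintro ⟨h1, h2⟩; exact absurd (hEAB.mpr h2) h1
      · constructor
        · rintro (h|h) <;> rw [hqv] at h <;> norm_num at h
        · rintro ⟨h1, h2⟩; exact absurd (hEAB.mp h1) h2
    all_goals {
      -- mn = ±2
      have hm2 : mn = 2 ∨ mn = -2 := by omega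
      have hqv : q j = 2 ∨ q j = -2 := by
        rcases hm2 with h | h
        · left
          have hnum : (q j).num = 2 := by rw [← hmn]; exact h
          rw [← Rat.num_div_den (q j), hnum, hden1 hd1]; norm_num
        · right
          have hnum : (q j).num = -2 := by rw [← hmn]; exact h
          rw [← Rat.num_div_den (q j), hnum, hden1 hd1]; norm_num
      have hEA : EvenAlpha A j := by
        apply hDA.mpr
        apply hDpsi.mp
        rcases (by omega : mn = 2 ∨ mn = -2) with h | h <;> rw [h] at hq1
        · exact ⟨ty B (σ j), hq1⟩
        · exact ⟨-ty B (σ j), by rw [hq1]; simp⟩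
      have hnEB : ¬ EvenAlpha B (σ j) := by
        intro hEB
        obtain ⟨u, hu⟩ := hDB.mp hEB
        have h4 : ty A j = (2 * mn) • ψ.symm u := by
          apply ψ.injective
          rw [map_zsmul, RingEquiv.apply_symm_apply, hq1, hu, smul_smul, mul_comm]
        obtain ⟨g, hg⟩ := Ideal.Quotient.mk_surjective (I := bottIdeal ℤ A) (ψ.symm u)
        have h5 := coeff_eq_of_mk_eq (A := A) (p := tpoly A j) (p' := (2*mn) • g)
          (by rw [map_zsmul, hg, mk_tpoly, h4]) j
        rw [coeff_tpoly, tcoef_self, coeff_smul, smul_eq_mul] at h5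
        rcases (by omega : mn = 2 ∨ mn = -2) with h | h <;> rw [h] at h5 <;> omega
      refine ⟨?_, ?_, ?_⟩
      · rcases hqv with h|h
        · exact Or.inr (Or.inr (Or.inr (Or.inr (Or.inl h))))
        · exact Or.inr (Or.inr (Or.inr (Or.inr (Or.inr h))))
      · constructor
        · rintro (h|h) <;> rcases hqv with h'|h' <;> rw [h'] at h <;> norm_num at h
        · rintro ⟨h1, _⟩; exact absurd hEA h1
      · exact iff_of_true hqv ⟨hEA, hnEB⟩ }
  · -- dn = 2, mn = ±1
    have hm1 : mn = 1 ∨ mn = -1 := by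
      rcases hm4 with h|h|h|h
      · exact Or.inl h
      · exact Or.inr h
      · rw [h, hd2] at hgcd; norm_num [Int.gcd] at hgcd
      · rw [h, hd2] at hgcd; norm_num [Int.gcd] at hgcd
    have hEB : EvenAlpha B (σ j) := by
      intro i hij
      have h := hc i
      rw [hd2, tcoef_lt B hij] at h
      rcases hm1 with h'|h' <;> rw [h'] at h <;> omega
    have hnEA : ¬ EvenAlpha A j := by
      intro hEA
      have hdv := dvd_coeff_of_smul hp (hDpsi.mpr (hDA.mp hEA)) (σ j)
      have h := hc (σ j)
      rw [hd2, tcoef_self] at h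
      obtain ⟨k, hk⟩ := hdv
      rcases hm1 with h'|h' <;> rw [h'] at h <;> omega
    have hqv : q j = 2⁻¹ ∨ q j = -2⁻¹ := by
      rcases hm1 with h'|h'
      · left
        have hnum : (q j).num = 1 := by rw [← hmn]; exact h'
        rw [← Rat.num_div_den (q j), hnum, hden2 hd2]; norm_num
      · right
        have hnum : (q j).num = -1 := by rw [← hmn]; exact h'
        rw [← Rat.num_div_den (q j), hnum, hden2 hd2]; norm_num
    refine ⟨?_, iff_of_true hqv ⟨hnEA, hEB⟩, ?_⟩
    · rcases hqv with h|h
      · exact Or.inl h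
      · exact Or.inr (Or.inl h)
    constructor
    · rintro (h|h) <;> rcases hqv with h'|h' <;> rw [h'] at h <;> norm_num at h
    · rintro ⟨h1, _⟩; exact absurd h1 hnEA

end
end

section
/- Let ψ : H(A) → H(B) be a graded ring isomorphism of integral Bott manifold cohomology rings with ψ(y^A_j) = q_j y^B_{σ(j)} over ℚ. If q_j = ±1 for all j, then ψ maps the total Pontrjagin class ∏_{j=1}^n (1 + 4(y^A_j)²) = ∏_{j=1}^n (1 + (α^A_j)²) of M(A) to the total Pontrjagin class ∏_{j=1}^n (1 + (α^B_j)²) of M(B). -/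
open MvPolynomial

noncomputable section

variable {n : ℕ}

/-- if all `q_j = ±1`, then `ψ` maps the total Pontrjagin class
`∏(1 + (α^A_j)²)` to `∏(1 + (α^B_j)²)`. -/
theorem pont_of_unit_q (n : ℕ) (A B : Matrix (Fin n) (Fin n) ℤ)
    (hA : StrictUpper A) (hB : StrictUpper B)
    (ψ : BottRing ℤ A ≃+* BottRing ℤ B) (hψ : IsGradedIso ψ)
    (q : Fin n → ℚ) (σ : Equiv.Perm (Fin n)) (hq0 : ∀ j, q j ≠ 0)
    (hqy : ∀ j : Fin n, ((q j).den : ℤ) • ψ (ty A j) = (q j).num • ty B (σ j))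
    (h1 : ∀ j, q j = 1 ∨ q j = -1) :
    ψ (pont A) = pont B := by
  have hsq : ∀ (C : Matrix (Fin n) (Fin n) ℤ) (j : Fin n),
      (ty C j) ^ 2 = (balpha ℤ C j) ^ 2 := by
    intro C j
    have h : (ty C j) ^ 2 - (balpha ℤ C j) ^ 2 = 0 := by
      show (Ideal.Quotient.mk (bottIdeal ℤ C))
          ((2 • X j - ∑ i ∈ Finset.Iio j, MvPolynomial.C ((C i j : ℤ)) * X i) ^ 2
            - (∑ i ∈ Finset.Iio j, MvPolynomial.C ((C i j : ℤ)) * X i) ^ 2) = 0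
      rw [Ideal.Quotient.eq_zero_iff_mem]
      have : (2 • X j - ∑ i ∈ Finset.Iio j, MvPolynomial.C ((C i j : ℤ)) * X i) ^ 2
          - (∑ i ∈ Finset.Iio j, MvPolynomial.C ((C i j : ℤ)) * X i) ^ 2
          = 4 * bottRel ℤ C j := by
        simp only [bottRel, Int.cast_id]; ring
      rw [this]
      exact Ideal.mul_mem_left _ 4 (Ideal.subset_span ⟨j, rfl⟩)
    linear_combination h
  have hty : ∀ j : Fin n, ψ (ty A j) ^ 2 = ty B (σ j) ^ 2 := by
    intro j
    have := hqy j
    rcases h1 j with h | h <;> rw [h] at this <;> simp at this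
    · rw [this]
    · rw [show ψ (ty A j) = -ty B (σ j) from by linear_combination this]; ring
  have : ψ (pont A) = ∏ j : Fin n, (1 + balpha ℤ B (σ j) ^ 2) := by
    rw [pont, map_prod]
    refine Finset.prod_congr rfl fun j _ => ?_
    rw [← hsq A j]
    show ψ.toRingHom _ = _
    rw [ψ.toRingHom.map_add, ψ.toRingHom.map_one, ψ.toRingHom.map_pow]
    show 1 + ψ (ty A j) ^ 2 = _
    rw [hty j, hsq B (σ j)]
  rw [this, pont]
  exact Equiv.prod_comp σ (fun j => 1 + balpha ℤ B j ^ 2)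

end
end

section
/- Let ψ : H(A) → H(B) be a graded ring isomorphism of Bott manifold cohomology rings with ψ(y^A_j) = q_j y^B_{σ(j)}. Suppose ψ(x^A_j) = a x^B_k + u and ψ(x^A_j − α^A_j) = a(x^B_k − α^B_k) − u with a a nonzero integer, height(u) < k, and u(u + a α^B_k) = 0. Then q_j = a, k = σ(j), and a^i_j = 0 whenever σ(i) > σ(j), where a^i_j are the entries of (E − (1/2)A)^{-1}. -/
open MvPolynomial

noncomputable section

variable {n : ℕ}

/- ===== auxiliary machinery for former_case ===== -/

abbrev TT (n : ℕ) := TrivSqZeroExt ℚ (Fin n → ℚ)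

lemma fstzero_mul (x y : TT n) (hx : x.fst = 0) (hy : y.fst = 0) : x * y = 0 := by
  apply TrivSqZeroExt.ext <;> simp [hx, hy]

def evalT (n : ℕ) : MvPolynomial (Fin n) ℤ →+* TT n :=
  (aeval (R := ℤ) fun i => (TrivSqZeroExt.inr (Pi.single i 1) : TT n)).toRingHom

lemma evalT_rel (C : Matrix (Fin n) (Fin n) ℤ) (j : Fin n) :
    evalT n (bottRel ℤ C j) = 0 := by
  unfold bottRel evalT
  simp only [AlgHom.toRingHom_eq_coe, RingHom.coe_coe, map_sub, map_pow, map_mul, map_sum,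
    aeval_X]
  rw [sq]
  rw [fstzero_mul _ _ (TrivSqZeroExt.fst_inr _ _) (TrivSqZeroExt.fst_inr _ _),
    fstzero_mul _ _ ?_ (TrivSqZeroExt.fst_inr _ _), sub_zero]
  rw [TrivSqZeroExt.fst_sum]
  apply Finset.sum_eq_zero
  intro i _
  simp [aeval_C, TrivSqZeroExt.fst_inr]

def coefRH (C : Matrix (Fin n) (Fin n) ℤ) : BottRing ℤ C →+* TT n :=
  Ideal.Quotient.lift (bottIdeal ℤ C) (evalT n) (by
    intro p hp
    have hle : bottIdeal ℤ C ≤ RingHom.ker (evalT n) := by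
      rw [bottIdeal, Ideal.span_le]
      rintro _ ⟨j, rfl⟩
      exact evalT_rel C j
    exact hle hp)

/-- the linear-coefficient vector of a class in the Bott ring -/
def cvec (C : Matrix (Fin n) (Fin n) ℤ) : BottRing ℤ C →+ (Fin n → ℚ) :=
  (TrivSqZeroExt.sndHom ℚ (Fin n → ℚ)).toAddMonoidHom.comp (coefRH C).toAddMonoidHom

lemma cvec_mk (C : Matrix (Fin n) (Fin n) ℤ) (p : MvPolynomial (Fin n) ℤ) :
    cvec C (Ideal.Quotient.mk (bottIdeal ℤ C) p) = (evalT n p).snd := by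
  simp [cvec, coefRH, Ideal.Quotient.lift_mk]
  rfl

lemma cvec_bx (C : Matrix (Fin n) (Fin n) ℤ) (i : Fin n) :
    cvec C (bx ℤ C i) = Pi.single i 1 := by
  rw [bx, cvec_mk]
  simp [evalT]

lemma cvec_balpha (C : Matrix (Fin n) (Fin n) ℤ) (k m : Fin n) :
    cvec C (balpha ℤ C k) m = if m < k then (C m k : ℚ) else 0 := by
  rw [balpha, cvec_mk]
  unfold evalT
  simp only [AlgHom.toRingHom_eq_coe, RingHom.coe_coe, map_sum, map_mul, aeval_C, aeval_X,
    Int.cast_id]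
  rw [TrivSqZeroExt.snd_sum, Finset.sum_apply]
  have hterm : ∀ i ∈ Finset.Iio k,
      (algebraMap ℤ (TT n) (C i k) * TrivSqZeroExt.inr (Pi.single i 1)).snd m
      = if m = i then (C i k : ℚ) else 0 := by
    intro i _
    have : algebraMap ℤ (TT n) (C i k) = TrivSqZeroExt.inl ((C i k : ℚ)) := by
      simp only [TrivSqZeroExt.algebraMap_eq_inl', Int.cast_id]
      rfl
    rw [this, TrivSqZeroExt.inl_mul_inr, TrivSqZeroExt.snd_inr]
    simp [Pi.single_apply]
  rw [Finset.sum_congr rfl hterm]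
  by_cases hm : m < k
  · rw [Finset.sum_eq_single m]
    · simp [hm]
    · intro b _ hb; simp [Ne.symm hb]
    · intro hmem; exact absurd (Finset.mem_Iio.mpr hm) hmem
  · rw [Finset.sum_eq_zero, if_neg hm]
    intro i hi
    have : m ≠ i := by
      rintro rfl; exact hm (Finset.mem_Iio.mp hi)
    simp [this]

lemma cvec_ty (C : Matrix (Fin n) (Fin n) ℤ) (k m : Fin n) :
    cvec C (ty C k) m
      = (if m = k then 2 else 0) - (if m < k then (C m k : ℚ) else 0) := by
  rw [ty, map_sub, map_nsmul, cvec_bx]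
  rw [Pi.sub_apply, Pi.smul_apply, cvec_balpha, Pi.single_apply]
  by_cases h : m = k <;> simp [h]

lemma balpha_eq_sum (C : Matrix (Fin n) (Fin n) ℤ) (hC : StrictUpper C) (i : Fin n) :
    balpha ℤ C i = ∑ m : Fin n, C m i • bx ℤ C m := by
  rw [balpha, map_sum]
  rw [Finset.sum_subset (Finset.subset_univ (Finset.Iio i))]
  · apply Finset.sum_congr rfl
    intro m _
    rw [eq_intCast (MvPolynomial.C : ℤ →+* MvPolynomial (Fin n) ℤ), map_mul, map_intCast]
    rw [bx, ← zsmul_eq_mul]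
    norm_cast
  · intro m _ hm
    have : C m i = 0 := hC m i (le_of_not_gt (by simpa using hm))
    simp [this]

set_option maxHeartbeats 1000000
set_option synthInstance.maxHeartbeats 200000

/-- in the former case of the vanishing-pair dichotomy for `ψ(x^A_j)`,
one has `q_j = a`, `k = σ(j)`, and `a^i_j = 0` whenever `σ(i) > σ(j)`. -/
theorem former_case (n : ℕ) (A B : Matrix (Fin n) (Fin n) ℤ)
    (hA : StrictUpper A) (hB : StrictUpper B)
    (ψ : BottRing ℤ A ≃+* BottRing ℤ B) (hψ : IsGradedIso ψ)
    (q : Fin n → ℚ) (σ : Equiv.Perm (Fin n)) (hq0 : ∀ j, q j ≠ 0)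
    (hqy : ∀ j : Fin n, ((q j).den : ℤ) • ψ (ty A j) = (q j).num • ty B (σ j))
    (j k : Fin n) (a : ℤ) (ha : a ≠ 0) (d : Fin n → ℤ) (hd : ∀ i, k ≤ i → d i = 0)
    (hu : (∑ i, d i • bx ℤ B i) * ((∑ i, d i • bx ℤ B i) + a • balpha ℤ B k) = 0)
    (hx : ψ (bx ℤ A j) = a • bx ℤ B k + ∑ i, d i • bx ℤ B i)
    (hx' : ψ (bx ℤ A j - balpha ℤ A j)
      = a • (bx ℤ B k - balpha ℤ B k) - ∑ i, d i • bx ℤ B i) :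
    q j = (a : ℚ) ∧ k = σ j ∧ ∀ i : Fin n, σ j < σ i → ainv A i j = 0 := by
  classical
  set V := cvec (n := n) B with hV
  set g : Fin n → Fin n → ℚ := fun i => V (ψ (bx ℤ A i)) with hg
  set t : Fin n → Fin n → ℚ := fun i => V (ψ (ty A i)) with ht
  set w : Fin n → Fin n → ℚ := fun m => V (ty B m) with hw
  have hwval : ∀ p m, w p m = (if m = p then 2 else 0) - (if m < p then (B m p : ℚ) else 0) := by
    intro p m; rw [hw]; exact cvec_ty B p m
  have hwdiag : ∀ p, w p p = 2 := by
    intro p; rw [hwval]; simp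
  have hwhigh : ∀ p m, p < m → w p m = 0 := by
    intro p m h; rw [hwval, if_neg (ne_of_gt h), if_neg (asymm h)]; ring
  -- t i = q i • w (σ i)
  have htq : ∀ i m, t i m = q i * w (σ i) m := by
    intro i m
    have h1 := congrArg V (hqy i)
    rw [map_zsmul, map_zsmul] at h1
    have h2 := congrFun h1 m
    simp only [Pi.smul_apply, zsmul_eq_mul, ← ht, ← hw] at h2
    have hden : ((q i).den : ℚ) ≠ 0 := by
      exact_mod_cast (q i).den_nz
    have hqi : q i = ((q i).num : ℚ) / ((q i).den : ℚ) := (Rat.num_div_den (q i)).symm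
    rw [hqi]
    push_cast at h2 ⊢
    field_simp
    linarith
  -- ψ (ty A j) = a • ty B k
  have hpsity : ψ (ty A j) = a • ty B k := by
    have h1 : ty A j = bx ℤ A j + (bx ℤ A j - balpha ℤ A j) := by
      rw [ty]; abel
    rw [h1, map_add, hx, hx', ty]
    module
  -- t j m = a * w k m
  have htj : ∀ m, t j m = (a : ℚ) * w k m := by
    intro m
    have h1 := congrFun (congrArg V hpsity) m
    rw [map_zsmul, Pi.smul_apply, zsmul_eq_mul] at h1
    simp only [ht, hw]
    exact h1
  have hwkj : ∀ m, (a : ℚ) * w k m = q j * w (σ j) m := by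
    intro m; rw [← htj, htq]
  -- k = σ j
  have hk : k = σ j := by
    by_contra hne
    rcases Ne.lt_or_gt hne with h | h
    · have h2 := hwkj (σ j)
      rw [hwdiag, hwhigh k (σ j) h] at h2
      have : q j = 0 := by linarith
      exact hq0 j this
    · have h2 := hwkj k
      rw [hwdiag, hwhigh (σ j) k h] at h2
      have : (a : ℚ) = 0 := by linarith
      exact ha (by exact_mod_cast this)
  have hqj : q j = (a : ℚ) := by
    have h2 := hwkj k
    rw [← hk, hwdiag] at h2
    linarith
  refine ⟨hqj, hk, ?_⟩
  -- coefficient vector of ψ (bx A j)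
  have hgj : ∀ m, g j m = (if m = k then (a : ℚ) else 0) + (d m : ℚ) := by
    intro m
    have h1 := congrArg V hx
    rw [map_add, map_zsmul, map_sum] at h1
    simp only [map_zsmul, hV, cvec_bx] at h1
    have h2 := congrFun h1 m
    simp only [Pi.add_apply, Pi.smul_apply, Finset.sum_apply, Pi.single_apply, zsmul_eq_mul,
      Pi.mul_apply, Pi.intCast_apply, mul_ite, mul_one, mul_zero] at h2
    rw [Finset.sum_ite_eq Finset.univ m fun i => ((d i : ℚ))] at h2
    simp only [Finset.mem_univ, if_true] at h2
    simp only [hg, hV]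
    exact h2
  have hgj0 : ∀ m, k < m → g j m = 0 := by
    intro m hm
    rw [hgj m, if_neg (ne_of_gt hm), hd m (le_of_lt hm)]
    simp
  -- the linear relation 2 g_i = t_i + ∑_r A_{ri} g_r
  have hrel : ∀ i m, 2 * g i m = t i m + ∑ r, (A r i : ℚ) * g r m := by
    intro i m
    have h0 : ψ (ty A i) = ψ ((2 : ℕ) • bx ℤ A i) - ψ (balpha ℤ A i) := by
      rw [← map_sub, ty]
    have h1 := congrArg V h0
    rw [map_sub, map_nsmul ψ, map_nsmul V] at h1
    have h2 : V (ψ (balpha ℤ A i)) m = ∑ r, (A r i : ℚ) * g r m := by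
      rw [balpha_eq_sum A hA i, map_sum, map_sum, Finset.sum_apply]
      refine Finset.sum_congr rfl fun r _ => ?_
      rw [map_zsmul, map_zsmul, Pi.smul_apply, zsmul_eq_mul]
    have h3 := congrFun h1 m
    rw [Pi.sub_apply, Pi.smul_apply, h2] at h3
    simp only [hg, ht, nsmul_eq_mul] at h3 ⊢
    push_cast at h3
    linarith
  -- matrix form
  set M : Matrix (Fin n) (Fin n) ℚ :=
    (1 : Matrix (Fin n) (Fin n) ℚ) - (2⁻¹ : ℚ) • A.map Int.cast with hM
  have htri : M.BlockTriangular id := by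
    intro i r hir
    simp only [hM, Matrix.sub_apply, Matrix.smul_apply, Matrix.map_apply, smul_eq_mul]
    rw [Matrix.one_apply_ne (by exact ne_of_gt hir), hA i r (le_of_lt hir)]
    simp
  have hMdet : M.det = 1 := by
    rw [Matrix.det_of_upperTriangular htri]
    apply Finset.prod_eq_one
    intro i _
    simp [hM, Matrix.one_apply, hA i i le_rfl]
  have hMinv : M * M⁻¹ = 1 := Matrix.mul_nonsing_inv _ (by rw [hMdet]; exact isUnit_one)
  set G : Matrix (Fin n) (Fin n) ℚ := Matrix.of fun m i => g i m with hG
  set Tm : Matrix (Fin n) (Fin n) ℚ := Matrix.of fun m i => t i m with hTm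
  have hGM : G * M = (2⁻¹ : ℚ) • Tm := by
    rw [hM, Matrix.mul_sub, Matrix.mul_one, Matrix.mul_smul]
    ext m i
    rw [Matrix.sub_apply, Matrix.smul_apply, Matrix.smul_apply, Matrix.mul_apply]
    simp only [hG, hTm, Matrix.of_apply, Matrix.map_apply, smul_eq_mul]
    have h1 := hrel i m
    have hsum : ∑ r, g r m * ((A r i : ℚ)) = ∑ r, (A r i : ℚ) * g r m :=
      Finset.sum_congr rfl fun r _ => mul_comm _ _
    rw [hsum]
    linarith
  have hGeq : G = (2⁻¹ : ℚ) • (Tm * M⁻¹) := by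
    calc G = G * (M * M⁻¹) := by rw [hMinv, Matrix.mul_one]
    _ = (G * M) * M⁻¹ := by rw [Matrix.mul_assoc]
    _ = (2⁻¹ : ℚ) • (Tm * M⁻¹) := by rw [hGM, Matrix.smul_mul]
  have hainv : M⁻¹ = ainv A := by unfold ainv; rw [hM]
  have hkey : ∀ i m, g i m = 2⁻¹ * ∑ r, t r m * ainv A r i := by
    intro i m
    have h1 := congrFun (congrFun hGeq m) i
    simp only [hG, hTm, Matrix.smul_apply, Matrix.mul_apply, Matrix.of_apply, smul_eq_mul,
      hainv] at h1
    exact h1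
  -- downward induction on σ i
  have main : ∀ c : ℕ, ∀ i : Fin n, n ≤ (σ i : ℕ) + c → σ j < σ i → ainv A i j = 0 := by
    intro c
    induction c with
    | zero =>
      intro i hi _
      exact absurd hi (by have := (σ i).isLt; omega)
    | succ c IH =>
      intro i hi hji
      have hmk : k < σ i := by rw [hk]; exact hji
      have h0 : g j (σ i) = 0 := hgj0 _ hmk
      have hsum : ∑ r, t r (σ i) * ainv A r j = 0 := by
        have h1 := hkey j (σ i)
        rw [h0] at h1
        linarith
      have hsingle : ∑ r, t r (σ i) * ainv A r j = t i (σ i) * ainv A i j := by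
        apply Finset.sum_eq_single_of_mem i (Finset.mem_univ i)
        intro r _ hr
        rcases lt_trichotomy (σ r) (σ i) with h | h | h
        · rw [htq, hwhigh (σ r) (σ i) h]
          ring
        · exact absurd (σ.injective h) hr
        · have h2 : ainv A r j = 0 := by
            apply IH r _ (lt_trans hji h)
            have h3 : (σ i : ℕ) < (σ r : ℕ) := h
            omega
          rw [h2, mul_zero]
      rw [hsingle, htq, hwdiag] at hsum
      have h5 : q i * 2 ≠ 0 := by
        intro h6
        rcases mul_eq_zero.mp h6 with h7 | h7
        · exact hq0 i h7
        · norm_num at h7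
      rcases mul_eq_zero.mp hsum with h7 | h7
      · exact absurd h7 h5
      · exact h7
  intro i hi
  exact main n i (by omega) hi


end
end

section
/- For every strictly upper triangular integer n×n matrix A there exists a strictly upper triangular integer matrix B such that none of α^B_1,…,α^B_n are of even exceptional type, and there is a graded ring isomorphism ψ : H(A) → H(B) with ψ(p(M(A))) = p(M(B)), where p denotes the total Pontrjagin class ∏_j (1 + α_j²). -/
open MvPolynomial

noncomputable section

variable {n : ℕ}

namespace RmExc

def aP (A : Matrix (Fin n) (Fin n) ℤ) (j : Fin n) : MvPolynomial (Fin n) ℤ :=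
  ∑ m ∈ Finset.Iio j, C (A m j) * X m

lemma balpha_eq (A : Matrix (Fin n) (Fin n) ℤ) (j : Fin n) :
    balpha ℤ A j = Ideal.Quotient.mk (bottIdeal ℤ A) (aP A j) := by
  simp [balpha, aP]

lemma bottRel_eq (A : Matrix (Fin n) (Fin n) ℤ) (j : Fin n) :
    bottRel ℤ A j = X j ^ 2 - aP A j * X j := by
  simp [bottRel, aP]

def th (v : Fin n → ℤ) : MvPolynomial (Fin n) ℤ →+* TrivSqZeroExt ℤ ℤ :=
  (aeval fun m => (TrivSqZeroExt.inr (v m) : TrivSqZeroExt ℤ ℤ)).toRingHom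

lemma th_X (v : Fin n → ℤ) (m : Fin n) : th v (X m) = TrivSqZeroExt.inr (v m) := by
  simp [th]

lemma th_aP (A : Matrix (Fin n) (Fin n) ℤ) (j : Fin n) (v : Fin n → ℤ) :
    th v (aP A j) = TrivSqZeroExt.inr (∑ m ∈ Finset.Iio j, A m j * v m) := by
  rw [aP, map_sum, TrivSqZeroExt.inr_sum]
  refine Finset.sum_congr rfl fun m _ => ?_
  rw [map_mul, th_X]
  show (aeval _) (C (A m j)) * _ = _
  rw [aeval_C, TrivSqZeroExt.algebraMap_eq_inl, TrivSqZeroExt.inl_mul_inr, smul_eq_mul]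

lemma th_rel (A : Matrix (Fin n) (Fin n) ℤ) (v : Fin n → ℤ) (r : Fin n) :
    th v (bottRel ℤ A r) = 0 := by
  rw [bottRel_eq, map_sub, map_pow, map_mul, th_X, th_aP, sq,
    TrivSqZeroExt.inr_mul_inr, TrivSqZeroExt.inr_mul_inr, sub_zero]

lemma th_ideal (A : Matrix (Fin n) (Fin n) ℤ) (v : Fin n → ℤ) :
    ∀ a ∈ bottIdeal ℤ A, th v a = 0 := by
  intro a ha
  have h : bottIdeal ℤ A ≤ RingHom.ker (th v) := by
    rw [bottIdeal, Ideal.span_le]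
    rintro _ ⟨r, rfl⟩
    exact th_rel A v r
  exact h ha

def lmap (A : Matrix (Fin n) (Fin n) ℤ) (v : Fin n → ℤ) :
    BottRing ℤ A →+* TrivSqZeroExt ℤ ℤ :=
  Ideal.Quotient.lift (bottIdeal ℤ A) (th v) (th_ideal A v)

lemma lmap_mk (A : Matrix (Fin n) (Fin n) ℤ) (v : Fin n → ℤ) (p : MvPolynomial (Fin n) ℤ) :
    lmap A v (Ideal.Quotient.mk (bottIdeal ℤ A) p) = th v p :=
  Ideal.Quotient.lift_mk _ _ _




lemma cast_mk (A : Matrix (Fin n) (Fin n) ℤ) (c : ℤ) :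
    ((c : ℤ) : MvPolynomial (Fin n) ℤ ⧸ bottIdeal ℤ A)
      = Ideal.Quotient.mk (bottIdeal ℤ A) (C c) := by
  rw [show (C c : MvPolynomial (Fin n) ℤ) = ((c : ℤ) : MvPolynomial (Fin n) ℤ) by simp,
    map_intCast]

lemma smul_mk (A : Matrix (Fin n) (Fin n) ℤ) (c : ℤ) (p : MvPolynomial (Fin n) ℤ) :
    c • Ideal.Quotient.mk (bottIdeal ℤ A) p = Ideal.Quotient.mk (bottIdeal ℤ A) (C c * p) := by
  rw [zsmul_eq_mul, cast_mk, ← map_mul]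

lemma ty_eq (A : Matrix (Fin n) (Fin n) ℤ) (i : Fin n) :
    ty A i = Ideal.Quotient.mk (bottIdeal ℤ A) (X i + X i - aP A i) := by
  rw [ty, bx, balpha_eq, two_smul ℕ, ← map_add, ← map_sub]

lemma th_C_mul (v : Fin n → ℤ) (q : MvPolynomial (Fin n) ℤ) (w : ℤ)
    (hq : th v q = TrivSqZeroExt.inr w) (a : ℤ) :
    th v (C a * q) = TrivSqZeroExt.inr (a * w) := by
  rw [map_mul, hq]
  show (aeval _) (C a) * _ = _
  rw [aeval_C, TrivSqZeroExt.algebraMap_eq_inl, TrivSqZeroExt.inl_mul_inr, smul_eq_mul]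

lemma th_lin (A : Matrix (Fin n) (Fin n) ℤ) (v : Fin n → ℤ) (i : Fin n) :
    th v (X i + X i - aP A i)
      = TrivSqZeroExt.inr (v i + v i - ∑ m ∈ Finset.Iio i, A m i * v m) := by
  rw [map_sub, map_add, th_X, th_aP, ← TrivSqZeroExt.inr_add, ← TrivSqZeroExt.inr_sub]

lemma extract (A : Matrix (Fin n) (Fin n) ℤ) {c : ℤ} {i j : Fin n}
    (h : (2 : ℤ) • balpha ℤ A j = c • ty A i) (v : Fin n → ℤ) :
    2 * (∑ m ∈ Finset.Iio j, A m j * v m)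
      = c * (v i + v i - ∑ m ∈ Finset.Iio i, A m i * v m) := by
  rw [balpha_eq, smul_mk, ty_eq, smul_mk] at h
  have h2 := congrArg (lmap A v) h
  rw [lmap_mk, lmap_mk, th_C_mul v _ _ (th_aP A j v), th_C_mul v _ _ (th_lin A v i)] at h2
  exact TrivSqZeroExt.inr_injective h2

lemma single_sum (A : Matrix (Fin n) (Fin n) ℤ) (j m : Fin n) :
    ∑ m' ∈ Finset.Iio j, A m' j * (Pi.single m (1 : ℤ) : Fin n → ℤ) m'
      = if m < j then A m j else 0 := by
  simp [Pi.single_apply, mul_ite, Finset.sum_ite_eq', Finset.mem_Iio]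

/-- Matrix-level witness for even exceptional type. -/
def Wit (A : Matrix (Fin n) (Fin n) ℤ) (i j : Fin n) : Prop :=
  i < j ∧ A i j ≠ 0 ∧ Even (A i j) ∧ (∀ k, k < i → 2 * A k j = -(A i j) * A k i) ∧
    (∀ k, i < k → k < j → A k j = 0)

lemma aP_wit (A : Matrix (Fin n) (Fin n) ℤ) (hA : StrictUpper A) {i j : Fin n} {d : ℤ}
    (hij : i < j) (h1 : A i j = 2 * d) (h2 : ∀ k, k < i → A k j = -d * A k i)
    (h3 : ∀ k, i < k → k < j → A k j = 0) :
    aP A j = C (2 * d) * X i - C d * aP A i := by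
  have hsub : (C d * aP A i : MvPolynomial (Fin n) ℤ)
      = ∑ m ∈ Finset.Iio j, C (d * A m i) * X m := by
    rw [aP, Finset.mul_sum]
    rw [Finset.sum_congr rfl (fun m _ => by rw [← mul_assoc, ← C_mul] :
      ∀ m ∈ Finset.Iio i, C d * (C (A m i) * X m) = C (d * A m i) * X m)]
    exact Finset.sum_subset (Finset.Iio_subset_Iio hij.le) (fun m _ hnm => by
      have h0 : A m i = 0 := hA m i (by simpa using hnm)
      simp [h0])
  have hXi : (C (2 * d) * X i : MvPolynomial (Fin n) ℤ)
      = ∑ m ∈ Finset.Iio j, (if m = i then C (2 * d) * X m else 0) := by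
    rw [Finset.sum_ite_eq' (Finset.Iio j) i (fun m => C (2 * d) * X m),
      if_pos (Finset.mem_Iio.mpr hij)]
  rw [hXi, hsub, ← Finset.sum_sub_distrib, aP]
  refine Finset.sum_congr rfl fun m hm => ?_
  rcases lt_trichotomy m i with hmi | rfl | him
  · rw [if_neg hmi.ne, h2 m hmi, zero_sub, ← neg_mul, ← C_neg, neg_mul]
  · have h0 : A m m = 0 := hA m m le_rfl
    rw [if_pos rfl, h1, h0, mul_zero, C_0, zero_mul, sub_zero]
  · have hmj : m < j := Finset.mem_Iio.mp hm
    have e1 : A m j = 0 := h3 m him hmj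
    have e2 : A m i = 0 := hA m i him.le
    rw [if_neg (by exact fun h => absurd (h ▸ him) (lt_irrefl _)), e1, e2]
    simp

lemma evenExc_iff (A : Matrix (Fin n) (Fin n) ℤ) (hA : StrictUpper A) (j : Fin n) :
    EvenExc A j ↔ ∃ i, Wit A i j := by
  constructor
  · rintro ⟨c, i, hc0, hce, hij, heq⟩
    have key : ∀ m : Fin n, 2 * (if m < j then A m j else 0)
        = c * (((if i = m then (1:ℤ) else 0) + (if i = m then (1:ℤ) else 0))
            - (if m < i then A m i else 0)) := by
      intro m
      have h := extract A heq (Pi.single m 1)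
      rwa [single_sum, single_sum, Pi.single_apply] at h
    have hci : c = A i j := by
      have h := key i
      rw [if_pos hij, if_pos rfl, if_neg (lt_irrefl i)] at h
      have h' : 2 * A i j = 2 * c := by linear_combination h
      omega
    refine ⟨i, hij, by omega, hci ▸ hce, ?_, ?_⟩
    · intro k hk
      have h := key k
      rw [if_pos (hk.trans hij), if_neg (by exact fun hh => absurd (hh ▸ hk) (lt_irrefl _)),
        if_pos hk] at h
      rw [← hci]
      linear_combination h
    · intro k hik hkj
      have h := key k
      rw [if_pos hkj, if_neg (by exact fun hh => absurd (hh ▸ hik) (lt_irrefl _)),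
        if_neg (by exact fun hh => absurd (hik.trans hh) (lt_irrefl _))] at h
      have h' : 2 * A k j = 0 := by linear_combination h
      omega
  · rintro ⟨i, hij, h0, he, h2, h3⟩
    obtain ⟨d, hd⟩ := he
    have h1 : A i j = 2 * d := by omega
    have h2' : ∀ k, k < i → A k j = -d * A k i := by
      intro k hk
      have h := h2 k hk
      rw [h1] at h
      have h' : 2 * A k j = 2 * (-d * A k i) := by linear_combination h
      exact mul_left_cancel₀ two_ne_zero h'
    refine ⟨A i j, i, h0, ⟨d, hd⟩, hij, ?_⟩
    rw [balpha_eq, smul_mk, ty_eq, smul_mk]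
    refine congrArg _ ?_
    rw [aP_wit A hA hij h1 h2' h3, h1]
    simp only [C_mul, map_ofNat]
    ring



lemma mem_bottIdeal (B : Matrix (Fin n) (Fin n) ℤ) (r : Fin n) :
    bottRel ℤ B r ∈ bottIdeal ℤ B :=
  Ideal.subset_span ⟨r, rfl⟩

/-- the column move -/
def mv (A : Matrix (Fin n) (Fin n) ℤ) (i j : Fin n) (d : ℤ) : Matrix (Fin n) (Fin n) ℤ :=
  Matrix.of fun m k => if k = j then -d * A m i else if m = i then A m k + d * A j k else A m k

/-- the substitution `x_j ↦ x_j + e x_i` -/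
def se (i j : Fin n) (e : ℤ) : Fin n → MvPolynomial (Fin n) ℤ :=
  fun m => if m = j then X j + C e * X i else X m

lemma se_homog (i j : Fin n) (e : ℤ) (m : Fin n) : (se i j e m).IsHomogeneous 1 := by
  rw [se]
  split
  · exact (isHomogeneous_X _ _).add (isHomogeneous_C_mul_X _ _)
  · exact isHomogeneous_X _ _

lemma se_comp (i j : Fin n) (e : ℤ) (hij : i ≠ j) (p : MvPolynomial (Fin n) ℤ) :
    aeval (se i j (-e)) (aeval (se i j e) p) = p := by
  have h : (aeval (se i j (-e))).comp (aeval (se i j e)) =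
      AlgHom.id ℤ (MvPolynomial (Fin n) ℤ) := by
    apply MvPolynomial.algHom_ext
    intro m
    simp only [AlgHom.comp_apply, aeval_X, AlgHom.id_apply, se]
    by_cases hm : m = j
    · subst hm
      rw [if_pos rfl, map_add, map_mul, aeval_X, aeval_X, aeval_C, MvPolynomial.algebraMap_eq]
      unfold se
      rw [if_pos rfl, if_neg hij, C_neg]
      ring
    · rw [if_neg hm, aeval_X, se, if_neg hm]
  exact DFunLike.congr_fun h p

lemma mv_strictUpper (A : Matrix (Fin n) (Fin n) ℤ) (hA : StrictUpper A) {i j : Fin n}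
    (hij : i < j) (d : ℤ) : StrictUpper (mv A i j d) := by
  intro m k hkm
  rw [mv, Matrix.of_apply]
  split
  · next h =>
    subst h
    rw [hA m i (le_trans hij.le hkm), mul_zero]
  · split
    · next h =>
      subst h
      rw [hA m k hkm, hA j k (hkm.trans hij.le), mul_zero, add_zero]
    · exact hA m k hkm

lemma mv_col_lt (A : Matrix (Fin n) (Fin n) ℤ) (hA : StrictUpper A) {i j k : Fin n}
    (hij : i < j) (d : ℤ) (hk : k < j) (m : Fin n) : mv A i j d m k = A m k := by
  rw [mv, Matrix.of_apply, if_neg (by exact fun h => absurd (h ▸ hk) (lt_irrefl _))]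
  split
  · next h =>
    subst h
    rw [hA j k hk.le, mul_zero, add_zero]
  · rfl

lemma aP_mv_lt (A : Matrix (Fin n) (Fin n) ℤ) (hA : StrictUpper A) {i j k : Fin n}
    (hij : i < j) (d : ℤ) (hk : k < j) : aP (mv A i j d) k = aP A k := by
  unfold aP
  exact Finset.sum_congr rfl fun m _ => by rw [mv_col_lt A hA hij d hk]

lemma aP_mv_j (A : Matrix (Fin n) (Fin n) ℤ) (hA : StrictUpper A) {i j : Fin n}
    (hij : i < j) (d : ℤ) : aP (mv A i j d) j = C (-d) * aP A i := by
  have hsub : (C (-d) * aP A i : MvPolynomial (Fin n) ℤ)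
      = ∑ m ∈ Finset.Iio j, C (-d * A m i) * X m := by
    rw [aP, Finset.mul_sum]
    rw [Finset.sum_congr rfl (fun m _ => by rw [← mul_assoc, ← C_mul] :
      ∀ m ∈ Finset.Iio i, C (-d) * (C (A m i) * X m) = C (-d * A m i) * X m)]
    exact Finset.sum_subset (Finset.Iio_subset_Iio hij.le) (fun m _ hnm => by
      have h0 : A m i = 0 := hA m i (by simpa using hnm)
      simp [h0])
  rw [hsub]
  unfold aP
  refine Finset.sum_congr rfl fun m _ => ?_
  rw [mv, Matrix.of_apply, if_pos rfl]

lemma aP_mv_gt (A : Matrix (Fin n) (Fin n) ℤ) {i j k : Fin n}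
    (hij : i < j) (d : ℤ) (hk : j < k) :
    aP (mv A i j d) k = aP A k + C (d * A j k) * X i := by
  unfold aP
  have hterm : ∀ m ∈ Finset.Iio k, C (mv A i j d m k) * X m
      = C (A m k) * X m + (if m = i then C (d * A j k) * X m else 0) := by
    intro m _
    by_cases hm : m = i
    · subst hm
      rw [if_pos rfl, mv, Matrix.of_apply, if_neg (by exact fun h => absurd (h ▸ hk) (lt_irrefl _)),
        if_pos rfl]
      simp only [C_add, C_mul]
      ring
    · rw [if_neg hm, mv, Matrix.of_apply,
        if_neg (by exact fun h => absurd (h ▸ hk) (lt_irrefl _)), if_neg hm, add_zero]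
  rw [Finset.sum_congr rfl hterm, Finset.sum_add_distrib,
    Finset.sum_ite_eq' (Finset.Iio k) i (fun m => C (d * A j k) * X m),
    if_pos (Finset.mem_Iio.mpr (hij.trans hk))]

lemma aeval_se_X (i j : Fin n) (e : ℤ) {k : Fin n} (hk : k ≠ j) :
    aeval (se i j e) (X k : MvPolynomial (Fin n) ℤ) = X k := by
  rw [aeval_X, se, if_neg hk]

lemma aeval_se_aP_le (B : Matrix (Fin n) (Fin n) ℤ) (i j : Fin n) (e : ℤ) {k : Fin n}
    (hk : k ≤ j) : aeval (se i j e) (aP B k) = aP B k := by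
  unfold aP
  rw [map_sum]
  refine Finset.sum_congr rfl fun m hm => ?_
  have hmj : m ≠ j := by
    have := Finset.mem_Iio.mp hm
    exact fun h => absurd (h ▸ (this.trans_le hk)) (lt_irrefl _)
  rw [map_mul, aeval_C, MvPolynomial.algebraMap_eq, aeval_se_X i j e hmj]

lemma aeval_se_aP_gt (B : Matrix (Fin n) (Fin n) ℤ) (i j : Fin n) (e : ℤ) {k : Fin n}
    (hjk : j < k) (hik : i < k) :
    aeval (se i j e) (aP B k) = aP B k + C (e * B j k) * X i := by
  unfold aP
  rw [map_sum]
  have hterm : ∀ m ∈ Finset.Iio k, aeval (se i j e) (C (B m k) * X m)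
      = C (B m k) * X m + (if m = j then C (e * B j k) * X i else 0) := by
    intro m _
    rw [map_mul, aeval_C, MvPolynomial.algebraMap_eq, aeval_X, se]
    by_cases hm : m = j
    · subst hm
      rw [if_pos rfl, if_pos rfl]
      simp only [C_mul]
      ring
    · rw [if_neg hm, if_neg hm, add_zero]
  rw [Finset.sum_congr rfl hterm, Finset.sum_add_distrib,
    Finset.sum_ite_eq' (Finset.Iio k) j (fun _ => C (e * B j k) * X i),
    if_pos (Finset.mem_Iio.mpr hjk)]



lemma aeval_se_Xj (i j : Fin n) (e : ℤ) :
    aeval (se i j e) (X j : MvPolynomial (Fin n) ℤ) = X j + C e * X i := by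
  rw [aeval_X, se, if_pos rfl]

lemma mv_row_j (A : Matrix (Fin n) (Fin n) ℤ) {i j k : Fin n} (hij : i < j) (hk : k ≠ j)
    (d : ℤ) : mv A i j d j k = A j k := by
  rw [mv, Matrix.of_apply, if_neg hk, if_neg (by exact fun h => absurd (h ▸ hij) (lt_irrefl _))]

lemma aeval_se_rel_lt (B : Matrix (Fin n) (Fin n) ℤ) (i j : Fin n) (e : ℤ) {k : Fin n}
    (hk : k < j) : aeval (se i j e) (bottRel ℤ B k) = bottRel ℤ B k := by
  rw [bottRel_eq, map_sub, map_pow, map_mul, aeval_se_X i j e hk.ne,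
    aeval_se_aP_le B i j e hk.le]

lemma aeval_se_rel_gt_A (A : Matrix (Fin n) (Fin n) ℤ) {i j k : Fin n} (hij : i < j)
    (d : ℤ) (hk : j < k) :
    aeval (se i j d) (bottRel ℤ A k) = bottRel ℤ (mv A i j d) k := by
  rw [bottRel_eq, map_sub, map_pow, map_mul, aeval_se_X i j d hk.ne',
    aeval_se_aP_gt A i j d hk (hij.trans hk), bottRel_eq, aP_mv_gt A hij d hk]

lemma aeval_se_rel_gt_B (A : Matrix (Fin n) (Fin n) ℤ) {i j k : Fin n} (hij : i < j)
    (d : ℤ) (hk : j < k) :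
    aeval (se i j (-d)) (bottRel ℤ (mv A i j d) k) = bottRel ℤ A k := by
  rw [bottRel_eq, map_sub, map_pow, map_mul, aeval_se_X i j (-d) hk.ne',
    aeval_se_aP_gt (mv A i j d) i j (-d) hk (hij.trans hk), bottRel_eq]
  have hjk : mv A i j d j k = A j k := mv_row_j A hij hk.ne' d
  rw [aP_mv_gt A hij d hk, hjk, neg_mul, C_neg]
  ring

lemma aeval_se_rel_j_A (A : Matrix (Fin n) (Fin n) ℤ) (hA : StrictUpper A) {i j : Fin n}
    {d : ℤ} (hij : i < j) (h1 : A i j = 2 * d) (h2 : ∀ k, k < i → A k j = -d * A k i)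
    (h3 : ∀ k, i < k → k < j → A k j = 0) :
    aeval (se i j d) (bottRel ℤ A j)
      = bottRel ℤ (mv A i j d) j - C (d * d) * bottRel ℤ (mv A i j d) i := by
  rw [bottRel_eq, map_sub, map_pow, map_mul, aeval_se_Xj,
    aeval_se_aP_le A i j d le_rfl, bottRel_eq, bottRel_eq, aP_mv_j A hA hij d,
    aP_mv_lt A hA hij d hij, aP_wit A hA hij h1 h2 h3]
  simp only [C_mul, C_neg, map_ofNat]
  ring

lemma aeval_se_rel_j_B (A : Matrix (Fin n) (Fin n) ℤ) (hA : StrictUpper A) {i j : Fin n}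
    {d : ℤ} (hij : i < j) (h1 : A i j = 2 * d) (h2 : ∀ k, k < i → A k j = -d * A k i)
    (h3 : ∀ k, i < k → k < j → A k j = 0) :
    aeval (se i j (-d)) (bottRel ℤ (mv A i j d) j)
      = bottRel ℤ A j + C (d * d) * bottRel ℤ A i := by
  rw [bottRel_eq, map_sub, map_pow, map_mul, aeval_se_Xj, aP_mv_j A hA hij d, map_mul,
    aeval_C, MvPolynomial.algebraMap_eq, aeval_se_aP_le A i j (-d) hij.le,
    bottRel_eq, bottRel_eq, aP_wit A hA hij h1 h2 h3]
  simp only [C_mul, C_neg, map_ofNat]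
  ring

def qlift (A B : Matrix (Fin n) (Fin n) ℤ) (s : Fin n → MvPolynomial (Fin n) ℤ)
    (h : ∀ r, aeval s (bottRel ℤ A r) ∈ bottIdeal ℤ B) :
    BottRing ℤ A →+* BottRing ℤ B :=
  Ideal.Quotient.lift (bottIdeal ℤ A)
    ((Ideal.Quotient.mk (bottIdeal ℤ B)).comp (aeval s : MvPolynomial (Fin n) ℤ →ₐ[ℤ]
      MvPolynomial (Fin n) ℤ).toRingHom)
    (by
      intro a ha
      have hle : bottIdeal ℤ A ≤ RingHom.ker ((Ideal.Quotient.mk (bottIdeal ℤ B)).comp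
          (aeval s : MvPolynomial (Fin n) ℤ →ₐ[ℤ] MvPolynomial (Fin n) ℤ).toRingHom) := by
        rw [bottIdeal, Ideal.span_le]
        rintro _ ⟨r, rfl⟩
        rw [SetLike.mem_coe, RingHom.mem_ker, RingHom.comp_apply]
        exact Ideal.Quotient.eq_zero_iff_mem.mpr (h r)
      exact RingHom.mem_ker.mp (hle ha))

lemma qlift_mk (A B : Matrix (Fin n) (Fin n) ℤ) (s : Fin n → MvPolynomial (Fin n) ℤ)
    (h : ∀ r, aeval s (bottRel ℤ A r) ∈ bottIdeal ℤ B) (p : MvPolynomial (Fin n) ℤ) :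
    qlift A B s h (Ideal.Quotient.mk (bottIdeal ℤ A) p)
      = Ideal.Quotient.mk (bottIdeal ℤ B) (aeval s p) :=
  Ideal.Quotient.lift_mk _ _ _

set_option synthInstance.maxHeartbeats 1000000 in
lemma piece_map {A B : Matrix (Fin n) (Fin n) ℤ} {s : Fin n → MvPolynomial (Fin n) ℤ}
    (hs : ∀ m, (s m).IsHomogeneous 1) (f : BottRing ℤ A →+* BottRing ℤ B)
    (hf : ∀ p, f (Ideal.Quotient.mk (bottIdeal ℤ A) p)
      = Ideal.Quotient.mk (bottIdeal ℤ B) (aeval s p))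
    (k : ℕ) {z : BottRing ℤ A} (hz : z ∈ piece ℤ A k) : f z ∈ piece ℤ B k := by
  rw [piece] at hz
  refine Submodule.span_induction ?_ ?_ ?_ ?_ hz
  · rintro x ⟨p, hp, rfl⟩
    refine Submodule.subset_span ⟨aeval s p, ?_, (hf p).symm⟩
    have := hp.aeval s hs
    rwa [one_mul] at this
  · rw [map_zero]; exact Submodule.zero_mem _
  · intro x y _ _ hx hy
    rw [map_add]; exact Submodule.add_mem _ hx hy
  · intro a x _ hx
    have : f (a • x) = a • f x := by
      rw [zsmul_eq_mul, zsmul_eq_mul, map_mul, map_intCast]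
    rw [this]
    exact Submodule.smul_mem _ _ hx



set_option synthInstance.maxHeartbeats 1000000 in
set_option maxHeartbeats 1000000 in
lemma step (A : Matrix (Fin n) (Fin n) ℤ) (hA : StrictUpper A) {i j : Fin n} {d : ℤ}
    (hij : i < j) (h1 : A i j = 2 * d) (h2 : ∀ k, k < i → A k j = -d * A k i)
    (h3 : ∀ k, i < k → k < j → A k j = 0) :
    ∃ ψ : BottRing ℤ A ≃+* BottRing ℤ (mv A i j d),
      IsGradedIso ψ ∧ ψ (pont A) = pont (mv A i j d) := by
  have hAB : ∀ r, aeval (se i j d) (bottRel ℤ A r) ∈ bottIdeal ℤ (mv A i j d) := by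
    intro r
    rcases lt_trichotomy r j with hr | rfl | hr
    · rw [aeval_se_rel_lt A i j d hr,
        show bottRel ℤ A r = bottRel ℤ (mv A i j d) r from by
          rw [bottRel_eq, bottRel_eq, aP_mv_lt A hA hij d hr]]
      exact mem_bottIdeal _ r
    · rw [aeval_se_rel_j_A A hA hij h1 h2 h3]
      exact sub_mem (mem_bottIdeal _ r) (Ideal.mul_mem_left _ _ (mem_bottIdeal _ i))
    · rw [aeval_se_rel_gt_A A hij d hr]
      exact mem_bottIdeal _ r
  have hBA : ∀ r, aeval (se i j (-d)) (bottRel ℤ (mv A i j d) r) ∈ bottIdeal ℤ A := by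
    intro r
    rcases lt_trichotomy r j with hr | rfl | hr
    · rw [show bottRel ℤ (mv A i j d) r = bottRel ℤ A r from by
          rw [bottRel_eq, bottRel_eq, aP_mv_lt A hA hij d hr],
        aeval_se_rel_lt A i j (-d) hr]
      exact mem_bottIdeal _ r
    · rw [aeval_se_rel_j_B A hA hij h1 h2 h3]
      exact add_mem (mem_bottIdeal _ r) (Ideal.mul_mem_left _ _ (mem_bottIdeal _ i))
    · rw [aeval_se_rel_gt_B A hij d hr]
      exact mem_bottIdeal _ r
  set f := qlift A (mv A i j d) (se i j d) hAB with hf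
  set g := qlift (mv A i j d) A (se i j (-d)) hBA with hg
  have hgf : g.comp f = RingHom.id _ := by
    apply Ideal.Quotient.ringHom_ext
    apply RingHom.ext
    intro p
    simp only [RingHom.comp_apply, RingHom.id_apply]
    rw [hf, hg, qlift_mk, qlift_mk, se_comp i j d hij.ne]
  have hfg : f.comp g = RingHom.id _ := by
    apply Ideal.Quotient.ringHom_ext
    apply RingHom.ext
    intro p
    simp only [RingHom.comp_apply, RingHom.id_apply]
    rw [hf, hg, qlift_mk, qlift_mk]
    have h := se_comp i j (-d) hij.ne p
    rw [neg_neg] at h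
    rw [h]
  refine ⟨RingEquiv.ofRingHom f g hfg hgf, ?_, ?_⟩
  · intro k z
    constructor
    · intro hz
      exact piece_map (se_homog i j d) f (fun p => qlift_mk _ _ _ _ p) k hz
    · intro hz
      have h := piece_map (se_homog i j (-d)) g (fun p => qlift_mk _ _ _ _ p) k hz
      have h2 : g (RingEquiv.ofRingHom f g hfg hgf z) = z := DFunLike.congr_fun hgf z
      rwa [h2] at h
  · show f (pont A) = pont (mv A i j d)
    rw [pont, pont, map_prod]
    refine Finset.prod_congr rfl fun k _ => ?_
    rw [map_add, map_one, map_pow]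
    by_cases hk : k = j
    · rw [hk]
      have hsq : f (balpha ℤ A j) ^ 2 = balpha ℤ (mv A i j d) j ^ 2 := by
        rw [balpha_eq, balpha_eq, hf, qlift_mk, aeval_se_aP_le A i j d le_rfl,
          ← map_pow, ← map_pow, Ideal.Quotient.eq]
        have hrel : bottRel ℤ (mv A i j d) i = X i ^ 2 - aP A i * X i := by
          rw [bottRel_eq, aP_mv_lt A hA hij d hij]
        have hcalc : aP A j ^ 2 - aP (mv A i j d) j ^ 2
            = C (4 * (d * d)) * bottRel ℤ (mv A i j d) i := by
          rw [aP_wit A hA hij h1 h2 h3, aP_mv_j A hA hij d, hrel]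
          simp only [C_mul, C_neg, map_ofNat]
          ring
        rw [hcalc]
        exact Ideal.mul_mem_left _ _ (mem_bottIdeal _ i)
      rw [hsq]
    · rcases lt_or_gt_of_ne hk with hr | hr
      · have hb : f (balpha ℤ A k) = balpha ℤ (mv A i j d) k := by
          rw [balpha_eq, balpha_eq, hf, qlift_mk, aeval_se_aP_le A i j d hr.le,
            aP_mv_lt A hA hij d hr]
        rw [hb]
      · have hb : f (balpha ℤ A k) = balpha ℤ (mv A i j d) k := by
          rw [balpha_eq, balpha_eq, hf, qlift_mk, aeval_se_aP_gt A i j d hr (hij.trans hr),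
            aP_mv_gt A hij d hr]
        rw [hb]



lemma mv_col_j (A : Matrix (Fin n) (Fin n) ℤ) (i j : Fin n) (d : ℤ) (m : Fin n) :
    mv A i j d m j = -d * A m i := by
  rw [mv, Matrix.of_apply, if_pos rfl]

lemma wit_unique (A : Matrix (Fin n) (Fin n) ℤ) {i i' j : Fin n}
    (h : Wit A i j) (h' : Wit A i' j) : i = i' := by
  by_contra hne
  rcases lt_or_gt_of_ne hne with hlt | hlt
  · exact h'.2.1 (h.2.2.2.2 i' hlt h'.1)
  · exact h.2.1 (h'.2.2.2.2 i hlt h.1)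

open Classical in
noncomputable def mu (A : Matrix (Fin n) (Fin n) ℤ) : ℕ :=
  if h : ∃ q : Fin n × Fin n, Wit A q.1 q.2 ∧ ∀ j' : Fin n, j' < q.2 → ¬ ∃ i', Wit A i' j' then
    (n - (h.choose.2 : ℕ)) * n + (h.choose.1 : ℕ) + 1
  else 0

lemma mu_spec (A : Matrix (Fin n) (Fin n) ℤ) {i j : Fin n} (h : Wit A i j)
    (hmin : ∀ j' : Fin n, j' < j → ¬ ∃ i', Wit A i' j') :
    mu A = (n - (j : ℕ)) * n + (i : ℕ) + 1 := by
  have hex : ∃ q : Fin n × Fin n, Wit A q.1 q.2 ∧ ∀ j' : Fin n, j' < q.2 →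
      ¬ ∃ i', Wit A i' j' := ⟨(i, j), h, hmin⟩
  rw [mu, dif_pos hex]
  obtain ⟨hw, hm⟩ := hex.choose_spec
  have hj : hex.choose.2 = j := by
    rcases lt_trichotomy hex.choose.2 j with hlt | he | hgt
    · exact absurd ⟨hex.choose.1, hw⟩ (hmin _ hlt)
    · exact he
    · exact absurd ⟨i, h⟩ (hm j hgt)
  have hi : hex.choose.1 = i := wit_unique A (hj ▸ hw) h
  rw [hj, hi]

lemma mu_lt (A : Matrix (Fin n) (Fin n) ℤ) (hA : StrictUpper A) {i j : Fin n} {d : ℤ}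
    (hw : Wit A i j) (hmin : ∀ j' : Fin n, j' < j → ¬ ∃ i', Wit A i' j')
    (h1 : A i j = 2 * d) : mu (mv A i j d) < mu A := by
  have hij := hw.1
  rw [mu_spec A hw hmin]
  by_cases hb : ∃ j' : Fin n, ∃ i', Wit (mv A i j d) i' j'
  · obtain ⟨j₀, hj₀mem, hj₀min⟩ :=
      (wellFounded_lt : WellFounded ((· < ·) : Fin n → Fin n → Prop)).has_min
        {j' : Fin n | ∃ i', Wit (mv A i j d) i' j'} hb
    obtain ⟨i₀, hi₀⟩ := hj₀mem
    have hminB : ∀ j' : Fin n, j' < j₀ → ¬ ∃ i', Wit (mv A i j d) i' j' :=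
      fun j' hlt hex => hj₀min j' hex hlt
    rw [mu_spec (mv A i j d) hi₀ hminB]
    have hjj : ¬ j₀ < j := by
      intro hlt
      refine hmin j₀ hlt ⟨i₀, ?_⟩
      obtain ⟨w1, w2, w3, w4, w5⟩ := hi₀
      have hcol : ∀ m, mv A i j d m j₀ = A m j₀ := mv_col_lt A hA hij d hlt
      have hcol' : ∀ m, mv A i j d m i₀ = A m i₀ := mv_col_lt A hA hij d (w1.trans hlt)
      refine ⟨w1, by rwa [hcol] at w2, by rwa [hcol] at w3, ?_, ?_⟩
      · intro k hk
        have := w4 k hk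
        rwa [hcol, hcol, hcol'] at this
      · intro k h1' h2'
        have := w5 k h1' h2'
        rwa [hcol] at this
    rcases eq_or_lt_of_le (not_lt.mp hjj) with he | hgt
    · -- j = j₀
      have hii : i₀ < i := by
        have hne : A i₀ i ≠ 0 := by
          have := hi₀.2.1
          rw [← he, mv_col_j] at this
          intro h0
          rw [h0, mul_zero] at this
          exact this rfl
        by_contra hge
        exact hne (hA i₀ i (not_lt.mp hge))
      have hval : (i₀ : ℕ) < (i : ℕ) := hii
      rw [← he]
      omega
    · have hv1 : (j : ℕ) < (j₀ : ℕ) := hgt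
      have hv2 : (j₀ : ℕ) < n := j₀.isLt
      have hv3 : (i₀ : ℕ) < n := i₀.isLt
      have hstep : (n - (j₀ : ℕ)) + 1 ≤ n - (j : ℕ) := by omega
      calc (n - (j₀ : ℕ)) * n + (i₀ : ℕ) + 1 ≤ (n - (j₀ : ℕ)) * n + n := by omega
        _ = ((n - (j₀ : ℕ)) + 1) * n := by ring
        _ ≤ (n - (j : ℕ)) * n := Nat.mul_le_mul_right n hstep
        _ < (n - (j : ℕ)) * n + ((i : ℕ) + 1) := by omega
  · have h0 : mu (mv A i j d) = 0 := by
      rw [mu, dif_neg]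
      rintro ⟨q, hq, -⟩
      exact hb ⟨q.2, q.1, hq⟩
    omega

lemma done_of_no_wit (A : Matrix (Fin n) (Fin n) ℤ) (hA : StrictUpper A)
    (hb : ¬ ∃ j : Fin n, ∃ i, Wit A i j) :
    ∃ B : Matrix (Fin n) (Fin n) ℤ, StrictUpper B ∧ (∀ j, ¬ EvenExc B j) ∧
      ∃ ψ : BottRing ℤ A ≃+* BottRing ℤ B, IsGradedIso ψ ∧ ψ (pont A) = pont B := by
  refine ⟨A, hA, ?_, RingEquiv.refl _, ?_, rfl⟩
  · intro j hexc
    exact hb ⟨j, (evenExc_iff A hA j).mp hexc⟩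
  · intro k z
    rw [RingEquiv.refl_apply]

lemma main_aux : ∀ (N : ℕ) (A : Matrix (Fin n) (Fin n) ℤ), StrictUpper A → mu A ≤ N →
    ∃ B : Matrix (Fin n) (Fin n) ℤ, StrictUpper B ∧ (∀ j, ¬ EvenExc B j) ∧
      ∃ ψ : BottRing ℤ A ≃+* BottRing ℤ B, IsGradedIso ψ ∧ ψ (pont A) = pont B := by
  intro N
  induction N with
  | zero =>
    intro A hA hmu
    by_cases hb : ∃ j : Fin n, ∃ i, Wit A i j
    · exfalso
      obtain ⟨j₀, hj₀mem, hj₀min⟩ :=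
        (wellFounded_lt : WellFounded ((· < ·) : Fin n → Fin n → Prop)).has_min
          {j' : Fin n | ∃ i', Wit A i' j'} hb
      obtain ⟨i₀, hi₀⟩ := hj₀mem
      rw [mu_spec A hi₀ (fun j' hlt hex => hj₀min j' hex hlt)] at hmu
      omega
    · exact done_of_no_wit A hA hb
  | succ N ih =>
    intro A hA hmu
    by_cases hb : ∃ j : Fin n, ∃ i, Wit A i j
    · obtain ⟨j₀, hj₀mem, hj₀min⟩ :=
        (wellFounded_lt : WellFounded ((· < ·) : Fin n → Fin n → Prop)).has_min
          {j' : Fin n | ∃ i', Wit A i' j'} hb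
      obtain ⟨i₀, hi₀⟩ := hj₀mem
      have hminA : ∀ j' : Fin n, j' < j₀ → ¬ ∃ i', Wit A i' j' :=
        fun j' hlt hex => hj₀min j' hex hlt
      obtain ⟨w1, w2, w3, w4, w5⟩ := hi₀
      obtain ⟨d, hd⟩ := w3
      have h1 : A i₀ j₀ = 2 * d := by omega
      have h2 : ∀ k, k < i₀ → A k j₀ = -d * A k i₀ := by
        intro k hk
        have h := w4 k hk
        rw [h1] at h
        have h' : 2 * A k j₀ = 2 * (-d * A k i₀) := by linear_combination h
        exact mul_left_cancel₀ two_ne_zero h'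
      obtain ⟨ψ₁, hg₁, hp₁⟩ := step A hA w1 h1 h2 w5
      have hmuB : mu (mv A i₀ j₀ d) ≤ N := by
        have := mu_lt A hA ⟨w1, w2, ⟨d, hd⟩, w4, w5⟩ hminA h1
        omega
      obtain ⟨B, hB1, hB2, ψ₂, hg₂, hp₂⟩ := ih (mv A i₀ j₀ d) (mv_strictUpper A hA w1 d) hmuB
      refine ⟨B, hB1, hB2, ψ₁.trans ψ₂, ?_, ?_⟩
      · intro k z
        rw [RingEquiv.trans_apply]
        exact (hg₁ k z).trans (hg₂ k (ψ₁ z))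
      · rw [RingEquiv.trans_apply, hp₁, hp₂]
    · exact done_of_no_wit A hA hb

end RmExc

/-- every `H(A)` is gradedly isomorphic, preserving the Pontrjagin
class, to some `H(B)` with no `α^B_j` of even exceptional type. -/
theorem remove_even_exceptional (n : ℕ) (A : Matrix (Fin n) (Fin n) ℤ)
    (hA : StrictUpper A) :
    ∃ B : Matrix (Fin n) (Fin n) ℤ, StrictUpper B ∧ (∀ j, ¬ EvenExc B j) ∧
      ∃ ψ : BottRing ℤ A ≃+* BottRing ℤ B, IsGradedIso ψ ∧ ψ (pont A) = pont B := by
  exact RmExc.main_aux (RmExc.mu A) A hA le_rfl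

end
end

section
/- Suppose α^A_j = c(x^A_i − (1/2)α^A_i) for a nonzero even integer c and i < j. Define the strictly upper triangular integer matrix B by B^ℓ_k = A^ℓ_k if k ≠ j and ℓ ≠ i; B^i_k = A^i_k + (c/2)A^j_k if k ≠ j; and B^ℓ_j = −(c/2)A^ℓ_i. Then the map sending x^A_ℓ ↦ x^B_ℓ for ℓ ≠ j and x^A_j ↦ x^B_j + (c/2)x^B_i induces a graded ring isomorphism H(A) → H(B). In particular, ψ(x^A_k(x^A_k − α^A_k)) = x^B_k(x^B_k − α^B_k) for k ≠ j, and ψ(x^A_j(x^A_j − α^A_j)) = x^B_j(x^B_j − α^B_j) − (c²/4)·x^B_i(x^B_i − α^B_i). -/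
open MvPolynomial

noncomputable section

variable {n : ℕ}

-- aux lemmas
lemma bottRel_isHomogeneous (R : Type) [CommRing R] (A : Matrix (Fin n) (Fin n) ℤ) (k : Fin n) :
    (bottRel R A k).IsHomogeneous 2 := by
  have h1 : ((∑ l ∈ Finset.Iio k, C ((A l k : R)) * X l : MvPolynomial (Fin n) R)).IsHomogeneous 1 :=
    IsHomogeneous.sum _ _ _ fun l _ => isHomogeneous_C_mul_X _ _
  simpa [bottRel] using (isHomogeneous_X_pow (R := R) k 2).sub (h1.mul (isHomogeneous_X R k))

lemma coeff_small_of_mem_bottIdeal {A : Matrix (Fin n) (Fin n) ℤ}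
    {q : MvPolynomial (Fin n) ℤ} (hq : q ∈ bottIdeal ℤ A) :
    ∀ d : Fin n →₀ ℕ, d.degree ≤ 1 → MvPolynomial.coeff d q = 0 := by
  refine Submodule.span_induction
    (p := fun x _ => ∀ d : Fin n →₀ ℕ, d.degree ≤ 1 → MvPolynomial.coeff d x = 0)
    ?_ ?_ ?_ ?_ hq
  · rintro x ⟨k, rfl⟩ d hd
    exact (bottRel_isHomogeneous ℤ A k).coeff_eq_zero (by omega)
  · simp
  · intro x y hx hy ihx ihy d hd
    simp [MvPolynomial.coeff_add, ihx d hd, ihy d hd]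
  · intro a x hx ih d hd
    rw [smul_eq_mul, MvPolynomial.coeff_mul]
    apply Finset.sum_eq_zero
    rintro ⟨u, v⟩ huv
    have h : u + v = d := Finset.HasAntidiagonal.mem_antidiagonal.mp huv
    have hdeg : (u + v).degree = u.degree + v.degree :=
      (Finsupp.sum_add_index' (fun _ => rfl) (fun _ _ _ => rfl) :
        (u + v).sum (fun _ m => m) = _)
    have hv : v.degree ≤ 1 := by rw [h] at hdeg; omega
    rw [ih v hv, mul_zero]

set_option maxHeartbeats 2000000 in
set_option synthInstance.maxHeartbeats 1000000 in
/-- the explicit change of matrix killing one even exceptional `α_j`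
yields a graded ring isomorphism; the defining relations transform as stated
(at the polynomial level, where `x_k(x_k − α_k)` is the relation `bottRel`). -/
theorem even_exceptional_step (n : ℕ) (A B : Matrix (Fin n) (Fin n) ℤ)
    (hA : StrictUpper A) (i j : Fin n) (hij : i < j)
    (c : ℤ) (hc : c ≠ 0) (hceven : Even c)
    (hexc : (2 : ℤ) • balpha ℤ A j = c • ty A i)
    (hB : ∀ k l : Fin n, B l k =
      if k = j then -(c / 2) * A l i
      else if l = i then A i k + (c / 2) * A j k
      else A l k) :
    StrictUpper B ∧
    (∃ ψ : BottRing ℤ A ≃+* BottRing ℤ B, IsGradedIso ψ ∧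
      (∀ l : Fin n, l ≠ j → ψ (bx ℤ A l) = bx ℤ B l) ∧
      ψ (bx ℤ A j) = bx ℤ B j + (c / 2) • bx ℤ B i) ∧
    (∀ k : Fin n, k ≠ j →
      MvPolynomial.aeval
        (fun l : Fin n => if l = j then (X j + C (c / 2) * X i : MvPolynomial (Fin n) ℤ)
          else X l) (bottRel ℤ A k) = bottRel ℤ B k) ∧
    MvPolynomial.aeval
      (fun l : Fin n => if l = j then (X j + C (c / 2) * X i : MvPolynomial (Fin n) ℤ)
        else X l) (bottRel ℤ A j)
      = bottRel ℤ B j - C ((c / 2) ^ 2) * bottRel ℤ B i := by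
  classical
  have hij' : i ≠ j := ne_of_lt hij
  set t : ℤ := c / 2 with ht
  have htc : c = 2 * t := by obtain ⟨r, hr⟩ := hceven; omega
  set f : Fin n → MvPolynomial (Fin n) ℤ :=
    (fun l : Fin n => if l = j then (X j + C t * X i : MvPolynomial (Fin n) ℤ) else X l)
    with hf
  set g : Fin n → MvPolynomial (Fin n) ℤ :=
    (fun l : Fin n => if l = j then (X j - C t * X i : MvPolynomial (Fin n) ℤ) else X l)
    with hg
  -- scalar action is C-multiplication
  have hsC : ∀ (a : ℤ) (p : MvPolynomial (Fin n) ℤ), a • p = C a * p :=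
    fun a p => MvPolynomial.smul_eq_C_mul p a
  have haC : ∀ a : ℤ, (MvPolynomial.aeval f) (C a : MvPolynomial (Fin n) ℤ) = C a := fun a => by
    rw [MvPolynomial.aeval_C]
    exact (eq_intCast _ a).trans (eq_intCast (C : ℤ →+* MvPolynomial (Fin n) ℤ) a).symm
  have haCg : ∀ a : ℤ, (MvPolynomial.aeval g) (C a : MvPolynomial (Fin n) ℤ) = C a := fun a => by
    rw [MvPolynomial.aeval_C]
    exact (eq_intCast _ a).trans (eq_intCast (C : ℤ →+* MvPolynomial (Fin n) ℤ) a).symm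
  have hfj : f j = X j + C t * X i := by simp [hf]
  have hfl : ∀ l : Fin n, l ≠ j → f l = X l := fun l hl => by simp [hf, hl]
  have hgj : g j = X j - C t * X i := by simp [hg]
  have hgl : ∀ l : Fin n, l ≠ j → g l = X l := fun l hl => by simp [hg, hl]
  -- the key linear identity α_j = c x_i − t α_i
  have halpha : (∑ l ∈ Finset.Iio j, C (A l j) * X l : MvPolynomial (Fin n) ℤ)
      = C c * X i - C t * (∑ l ∈ Finset.Iio i, C (A l i) * X l) := by
    set αi : MvPolynomial (Fin n) ℤ := ∑ l ∈ Finset.Iio i, C (A l i) * X l with hαi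
    set αj : MvPolynomial (Fin n) ℤ := ∑ l ∈ Finset.Iio j, C (A l j) * X l with hαj
    have e2 : (Ideal.Quotient.mk (bottIdeal ℤ A)) (C (2:ℤ)) = 2 := by
      rw [show (C (2:ℤ) : MvPolynomial (Fin n) ℤ) = 2 from map_ofNat _ 2, map_ofNat]
    have ec : (Ideal.Quotient.mk (bottIdeal ℤ A)) (C c) = (c : BottRing ℤ A) := by
      rw [show (C c : MvPolynomial (Fin n) ℤ) = (c : MvPolynomial (Fin n) ℤ) from
        eq_intCast (C : ℤ →+* MvPolynomial (Fin n) ℤ) c, map_intCast]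
    have hexc2 : (Ideal.Quotient.mk (bottIdeal ℤ A)) (C 2 * αj)
        = (Ideal.Quotient.mk (bottIdeal ℤ A)) (C c * (C 2 * X i - αi)) := by
      have h := hexc
      rw [ty, smul_sub] at h
      simp only [balpha, bx, Int.cast_id, zsmul_eq_mul, nsmul_eq_mul, Int.cast_ofNat,
        Nat.cast_ofNat] at h
      rw [map_mul, map_mul, map_sub, map_mul, e2, ec]
      linear_combination h
    have hmem : (C 2 * αj - C c * (C 2 * X i - αi)) ∈ bottIdeal ℤ A := by
      rw [← Ideal.Quotient.eq_zero_iff_mem, map_sub, sub_eq_zero]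
      exact hexc2
    have hhomi : αi.IsHomogeneous 1 :=
      IsHomogeneous.sum _ _ _ fun l _ => isHomogeneous_C_mul_X _ _
    have hhomj : αj.IsHomogeneous 1 :=
      IsHomogeneous.sum _ _ _ fun l _ => isHomogeneous_C_mul_X _ _
    have hq : (C 2 * αj - C c * (C 2 * X i - αi) : MvPolynomial (Fin n) ℤ) = 0 := by
      apply MvPolynomial.ext
      intro d
      rw [MvPolynomial.coeff_zero]
      by_cases hd : d.degree ≤ 1
      · exact coeff_small_of_mem_bottIdeal hmem d hd
      · have hhom : (C 2 * αj - C c * (C 2 * X i - αi) :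
            MvPolynomial (Fin n) ℤ).IsHomogeneous 1 :=
          (hhomj.C_mul 2).sub ((((isHomogeneous_X ℤ i).C_mul 2).sub hhomi).C_mul c)
        exact hhom.coeff_eq_zero (by omega)
    rw [sub_eq_zero] at hq
    have h2 : C (2:ℤ) * αj = C (2:ℤ) * (C c * X i - C t * αi) := by
      rw [hq, htc, map_mul]
      ring
    exact mul_left_cancel₀ (by simp) h2
  -- extension of α_i sum
  have hext : (∑ l ∈ Finset.Iio j, C (A l i) * X l : MvPolynomial (Fin n) ℤ)
      = ∑ l ∈ Finset.Iio i, C (A l i) * X l := by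
    refine (Finset.sum_subset (fun l hl => Finset.mem_Iio.mpr
      (lt_trans (Finset.mem_Iio.mp hl) hij)) ?_).symm
    intro l _ hl
    rw [hA l i (le_of_not_gt fun h => hl (Finset.mem_Iio.mpr h)), map_zero, zero_mul]
  -- the two sum computations
  have hBsum : ∀ k : Fin n, k ≠ j →
      (∑ l ∈ Finset.Iio k, C (B l k) * X l : MvPolynomial (Fin n) ℤ)
        = (∑ l ∈ Finset.Iio k, C (A l k) * X l) + C (t * A j k) * X i := by
    intro k hk
    have hterm : ∀ l ∈ Finset.Iio k, (C (B l k) * X l : MvPolynomial (Fin n) ℤ)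
        = C (A l k) * X l + (if l = i then C (t * A j k) * X i else 0) := by
      intro l _
      rw [hB k l, if_neg hk]
      by_cases hli : l = i
      · subst hli
        rw [if_pos rfl, if_pos rfl, map_add, add_mul, map_mul]
      · rw [if_neg hli, if_neg hli, add_zero]
    rw [Finset.sum_congr rfl hterm, Finset.sum_add_distrib,
      Finset.sum_ite_eq' (Finset.Iio k) i (fun _ => C (t * A j k) * X i)]
    by_cases hik : i ∈ Finset.Iio k
    · rw [if_pos hik]
    · rw [if_neg hik, hA j k (le_of_lt (lt_of_le_of_lt
        (le_of_not_gt fun h => hik (Finset.mem_Iio.mpr h)) hij))]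
      simp
  have hFsum : ∀ k : Fin n, k ≠ j →
      (∑ l ∈ Finset.Iio k, C (A l k) * f l : MvPolynomial (Fin n) ℤ)
        = (∑ l ∈ Finset.Iio k, C (A l k) * X l) + C (t * A j k) * X i := by
    intro k hk
    have hterm : ∀ l ∈ Finset.Iio k, (C (A l k) * f l : MvPolynomial (Fin n) ℤ)
        = C (A l k) * X l + (if l = j then C (t * A j k) * X i else 0) := by
      intro l _
      by_cases hlj : l = j
      · rw [hlj, hfj, if_pos rfl, map_mul]
        ring
      · rw [hfl l hlj, if_neg hlj, add_zero]
    rw [Finset.sum_congr rfl hterm, Finset.sum_add_distrib,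
      Finset.sum_ite_eq' (Finset.Iio k) j (fun _ => C (t * A j k) * X i)]
    by_cases hjk : j ∈ Finset.Iio k
    · rw [if_pos hjk]
    · rw [if_neg hjk, hA j k (le_of_not_gt fun h => hjk (Finset.mem_Iio.mpr h))]
      simp
  -- part 3
  have hrel : ∀ k : Fin n, k ≠ j →
      (MvPolynomial.aeval f) (bottRel ℤ A k) = bottRel ℤ B k := by
    intro k hk
    have hfk : f k = X k := hfl k hk
    simp only [bottRel, Int.cast_id, map_sub, map_pow, map_mul, map_sum, MvPolynomial.aeval_X, haC]
    rw [hfk, hFsum k hk, hBsum k hk]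
  -- part 4
  have hrelj : (MvPolynomial.aeval f) (bottRel ℤ A j)
      = bottRel ℤ B j - C (t ^ 2) * bottRel ℤ B i := by
    have hsumj : (∑ l ∈ Finset.Iio j, C (A l j) * f l : MvPolynomial (Fin n) ℤ)
        = ∑ l ∈ Finset.Iio j, C (A l j) * X l :=
      Finset.sum_congr rfl fun l hl => by
        rw [hfl l (ne_of_lt (Finset.mem_Iio.mp hl))]
    have hβj : (∑ l ∈ Finset.Iio j, C (B l j) * X l : MvPolynomial (Fin n) ℤ)
        = -(C t * ∑ l ∈ Finset.Iio i, C (A l i) * X l) := by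
      rw [← hext, Finset.mul_sum, ← Finset.sum_neg_distrib]
      refine Finset.sum_congr rfl fun l _ => ?_
      rw [hB j l, if_pos rfl, map_mul, map_neg]
      ring
    have hβi : (∑ l ∈ Finset.Iio i, C (B l i) * X l : MvPolynomial (Fin n) ℤ)
        = ∑ l ∈ Finset.Iio i, C (A l i) * X l := by
      refine Finset.sum_congr rfl fun l hl => ?_
      rw [hB i l, if_neg hij', if_neg (ne_of_lt (Finset.mem_Iio.mp hl))]
    have hCc : (C c : MvPolynomial (Fin n) ℤ) = 2 * C t := by
      rw [htc, map_mul, map_ofNat]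
    simp only [bottRel, Int.cast_id, map_sub, map_pow, map_mul, map_sum, MvPolynomial.aeval_X, haC]
    rw [hfj, hsumj, halpha, hβj, hβi, hCc]
    ring
  refine ⟨?_, ?_, hrel, hrelj⟩
  · -- strict upper
    intro r s hsr
    rw [hB s r]
    by_cases hs : s = j
    · rw [if_pos hs]
      have : A r i = 0 := hA r i (le_of_lt (lt_of_lt_of_le hij (hs ▸ hsr)))
      rw [this, mul_zero]
    · rw [if_neg hs]
      by_cases hr : r = i
      · rw [if_pos hr]
        have h1 : A i s = 0 := hA i s (hr ▸ hsr)
        have h2 : A j s = 0 := hA j s (le_of_lt (lt_of_le_of_lt (hr ▸ hsr) hij))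
        rw [h1, h2, mul_zero, add_zero]
      · rw [if_neg hr]
        exact hA r s hsr
  · -- the isomorphism
    have hGF : ∀ p : MvPolynomial (Fin n) ℤ,
        (MvPolynomial.aeval g) ((MvPolynomial.aeval f) p) = p := by
      intro p
      have hcomp : (MvPolynomial.aeval g).comp (MvPolynomial.aeval f)
          = AlgHom.id ℤ (MvPolynomial (Fin n) ℤ) := by
        apply MvPolynomial.algHom_ext
        intro l
        simp only [AlgHom.comp_apply, MvPolynomial.aeval_X, AlgHom.id_apply]
        by_cases hl : l = j
        · rw [hl, hfj, map_add, map_mul, MvPolynomial.aeval_X, MvPolynomial.aeval_X, haCg,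
            hgj, hgl i hij']
          ring
        · rw [hfl l hl, MvPolynomial.aeval_X, hgl l hl]
      exact DFunLike.congr_fun hcomp p
    have hFG : ∀ p : MvPolynomial (Fin n) ℤ,
        (MvPolynomial.aeval f) ((MvPolynomial.aeval g) p) = p := by
      intro p
      have hcomp : (MvPolynomial.aeval f).comp (MvPolynomial.aeval g)
          = AlgHom.id ℤ (MvPolynomial (Fin n) ℤ) := by
        apply MvPolynomial.algHom_ext
        intro l
        simp only [AlgHom.comp_apply, MvPolynomial.aeval_X, AlgHom.id_apply]
        by_cases hl : l = j
        · rw [hl, hgj, map_sub, map_mul, MvPolynomial.aeval_X, MvPolynomial.aeval_X, haC,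
            hfj, hfl i hij']
          ring
        · rw [hgl l hl, MvPolynomial.aeval_X, hfl l hl]
      exact DFunLike.congr_fun hcomp p
    let eA : MvPolynomial (Fin n) ℤ ≃ₐ[ℤ] MvPolynomial (Fin n) ℤ :=
      AlgEquiv.ofAlgHom
        (MvPolynomial.aeval f : MvPolynomial (Fin n) ℤ →ₐ[ℤ] MvPolynomial (Fin n) ℤ)
        (MvPolynomial.aeval g : MvPolynomial (Fin n) ℤ →ₐ[ℤ] MvPolynomial (Fin n) ℤ)
        (AlgHom.ext hFG) (AlgHom.ext hGF)
    let e : MvPolynomial (Fin n) ℤ ≃+* MvPolynomial (Fin n) ℤ := eA.toRingEquiv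
    have hmap : (bottIdeal ℤ A).map (e : MvPolynomial (Fin n) ℤ →+* MvPolynomial (Fin n) ℤ)
        = bottIdeal ℤ B := by
      rw [bottIdeal, Ideal.map_span]
      apply le_antisymm
      · rw [Ideal.span_le]
        rintro x ⟨y, ⟨k, rfl⟩, rfl⟩
        show (MvPolynomial.aeval f) (bottRel ℤ A k) ∈ bottIdeal ℤ B
        by_cases hk : k = j
        · rw [hk, hrelj]
          exact sub_mem (Ideal.subset_span (Set.mem_range_self j))
            (Ideal.mul_mem_left _ _ (Ideal.subset_span (Set.mem_range_self i)))
        · rw [hrel k hk]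
          exact Ideal.subset_span (Set.mem_range_self k)
      · rw [bottIdeal, Ideal.span_le]
        rintro x ⟨k, rfl⟩
        by_cases hk : k = j
        · have hx : bottRel ℤ B k = (MvPolynomial.aeval f) (bottRel ℤ A j)
              + C (t ^ 2) * (MvPolynomial.aeval f) (bottRel ℤ A i) := by
            rw [hrelj, hrel i hij', hk]
            ring
          rw [hx]
          exact add_mem (Ideal.subset_span ⟨bottRel ℤ A j, Set.mem_range_self j, rfl⟩)
            (Ideal.mul_mem_left _ _
              (Ideal.subset_span ⟨bottRel ℤ A i, Set.mem_range_self i, rfl⟩))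
        · have hx : bottRel ℤ B k = (MvPolynomial.aeval f) (bottRel ℤ A k) := (hrel k hk).symm
          rw [hx]
          exact Ideal.subset_span ⟨bottRel ℤ A k, Set.mem_range_self k, rfl⟩
    let ψ : BottRing ℤ A ≃+* BottRing ℤ B :=
      Ideal.quotientEquiv (bottIdeal ℤ A) (bottIdeal ℤ B) e hmap.symm
    have hψmk : ∀ p : MvPolynomial (Fin n) ℤ, ψ (Ideal.Quotient.mk (bottIdeal ℤ A) p)
        = Ideal.Quotient.mk (bottIdeal ℤ B) ((MvPolynomial.aeval f) p) := fun p =>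
      Ideal.quotientEquiv_mk _ _ _ _ p
    have hψsymm : ∀ p : MvPolynomial (Fin n) ℤ, ψ.symm (Ideal.Quotient.mk (bottIdeal ℤ B) p)
        = Ideal.Quotient.mk (bottIdeal ℤ A) ((MvPolynomial.aeval g) p) := by
      intro p
      apply ψ.injective
      rw [RingEquiv.apply_symm_apply, hψmk, hFG]
    have hf1 : ∀ l : Fin n, (f l).IsHomogeneous 1 := by
      intro l
      by_cases hl : l = j
      · rw [hl, hfj]; exact (isHomogeneous_X ℤ j).add (isHomogeneous_C_mul_X t i)
      · rw [hfl l hl]; exact isHomogeneous_X ℤ l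
    have hg1 : ∀ l : Fin n, (g l).IsHomogeneous 1 := by
      intro l
      by_cases hl : l = j
      · rw [hl, hgj]; exact (isHomogeneous_X ℤ j).sub (isHomogeneous_C_mul_X t i)
      · rw [hgl l hl]; exact isHomogeneous_X ℤ l
    have fwd : ∀ (k : ℕ) (z : BottRing ℤ A), z ∈ piece ℤ A k → ψ z ∈ piece ℤ B k := by
      intro k z hz
      refine Submodule.span_induction (p := fun z _ => ψ z ∈ piece ℤ B k) ?_ ?_ ?_ ?_ hz
      · rintro z ⟨p, hp, rfl⟩
        rw [hψmk]
        exact Submodule.subset_span ⟨(MvPolynomial.aeval f) p, by simpa using hp.aeval f hf1, rfl⟩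
      · show ψ (0 : BottRing ℤ A) ∈ piece ℤ B k
        rw [map_zero]; exact Submodule.zero_mem _
      · intro x y _ _ hx hy
        show ψ (x + y) ∈ piece ℤ B k
        rw [map_add]; exact Submodule.add_mem _ hx hy
      · intro a x _ hx
        show ψ (a • x) ∈ piece ℤ B k
        rw [map_zsmul]
        exact Submodule.smul_mem _ a hx
    have bwd : ∀ (k : ℕ) (z : BottRing ℤ B), z ∈ piece ℤ B k → ψ.symm z ∈ piece ℤ A k := by
      intro k z hz
      refine Submodule.span_induction (p := fun z _ => ψ.symm z ∈ piece ℤ A k) ?_ ?_ ?_ ?_ hz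
      · rintro z ⟨p, hp, rfl⟩
        rw [hψsymm]
        exact Submodule.subset_span ⟨(MvPolynomial.aeval g) p, by simpa using hp.aeval g hg1, rfl⟩
      · show ψ.symm (0 : BottRing ℤ B) ∈ piece ℤ A k
        rw [map_zero]; exact Submodule.zero_mem _
      · intro x y _ _ hx hy
        show ψ.symm (x + y) ∈ piece ℤ A k
        rw [map_add]; exact Submodule.add_mem _ hx hy
      · intro a x _ hx
        show ψ.symm (a • x) ∈ piece ℤ A k
        rw [map_zsmul]
        exact Submodule.smul_mem _ a hx
    refine ⟨ψ, ?_, ?_, ?_⟩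
    · intro k z
      constructor
      · exact fwd k z
      · intro h
        have h2 := bwd k (ψ z) h
        rwa [RingEquiv.symm_apply_apply] at h2
    · intro l hl
      rw [bx, hψmk, MvPolynomial.aeval_X, hfl l hl, bx]
    · rw [bx, hψmk, MvPolynomial.aeval_X, hfj, map_add]
      have hsm : (t • bx ℤ B i : BottRing ℤ B) = Ideal.Quotient.mk (bottIdeal ℤ B) (C t * X i) := by
        rw [bx, zsmul_eq_mul, map_mul,
          show (C t : MvPolynomial (Fin n) ℤ) = (t : MvPolynomial (Fin n) ℤ) from
            eq_intCast (C : ℤ →+* MvPolynomial (Fin n) ℤ) t, map_intCast]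
      rw [hsm]
      rfl

end
end

section
/- Let A be a strictly upper triangular integer n×n matrix and H₂(A) = (ℤ/2)[x₁,…,xₙ]/(x_j² − ᾱ_j x_j) the mod 2 cohomology ring of the Bott manifold M(A), where ᾱ_j is α^A_j reduced mod 2. Then the following are equivalent: (1) H₂(A) is isomorphic as a graded ring to (ℤ/2)[x₁,…,xₙ]/(x₁²,…,xₙ²) (the mod 2 cohomology of (ℂP¹)ⁿ); (2) α^A_j ≡ 0 (mod 2) for all j; (3) every entry of A is even. -/
open MvPolynomial

noncomputable section

variable {n : ℕ}

section Z2Aux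
namespace Z2Aux


lemma degree_add (a b : Fin n →₀ ℕ) : (a + b).degree = a.degree + b.degree := by
  simp [Finsupp.degree_eq_weight_one, map_add]

lemma coeff_mul_homog {p g : MvPolynomial (Fin n) (ZMod 2)} (hp : p.IsHomogeneous 2)
    {d : Fin n →₀ ℕ} (hd : d.degree = 2) :
    coeff d (g * p) = constantCoeff g * coeff d p := by
  rw [coeff_mul, Finset.sum_eq_single ((0 : Fin n →₀ ℕ), d)]
  · rw [show coeff 0 g = constantCoeff g from rfl]
  · rintro ⟨a, b⟩ hab hne
    have habd : a + b = d := Finset.HasAntidiagonal.mem_antidiagonal.mp hab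
    by_cases hb : b.degree = 2
    · have ha : a.degree = 0 := by
        have := degree_add a b
        rw [habd, hd, hb] at this
        omega
      have ha0 : a = 0 := (Finsupp.degree_eq_zero_iff _).mp ha
      subst ha0
      rw [zero_add] at habd
      subst habd
      exact absurd rfl hne
    · rw [hp.coeff_eq_zero hb, mul_zero]
  · intro hnm
    exact absurd (Finset.HasAntidiagonal.mem_antidiagonal.mpr (zero_add d)) hnm

lemma bottRel_hom (A : Matrix (Fin n) (Fin n) ℤ) (k : Fin n) :
    (bottRel (ZMod 2) A k).IsHomogeneous 2 := by
  apply MvPolynomial.IsHomogeneous.sub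
  · simpa using (isHomogeneous_X (ZMod 2) k).pow 2
  · have h1 : (∑ i ∈ Finset.Iio k, C ((A i k : ZMod 2)) * X i).IsHomogeneous 1 := by
      apply IsHomogeneous.sum
      intro i _
      simpa using (isHomogeneous_C (Fin n) ((A i k : ZMod 2))).mul (isHomogeneous_X (ZMod 2) i)
    exact h1.mul (isHomogeneous_X (ZMod 2) k)

lemma mem_piece_iff {R : Type} [CommRing R] {A : Matrix (Fin n) (Fin n) ℤ} {k : ℕ}
    {z : BottRing R A} :
    z ∈ piece R A k ↔ ∃ p : MvPolynomial (Fin n) R, p.IsHomogeneous k ∧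
      Ideal.Quotient.mk (bottIdeal R A) p = z := by
  constructor
  · intro hz
    refine Submodule.span_induction
      (p := fun z _ => ∃ p : MvPolynomial (Fin n) R, p.IsHomogeneous k ∧
        Ideal.Quotient.mk (bottIdeal R A) p = z) ?_ ?_ ?_ ?_ hz
    · rintro x hx; exact hx
    · exact ⟨0, isHomogeneous_zero _ _ _, map_zero _⟩
    · rintro x y - - ⟨p, hp, hx⟩ ⟨q, hq, hy⟩
      exact ⟨p + q, hp.add hq, by rw [map_add, hx, hy]⟩
    · rintro c x - ⟨p, hp, hx⟩
      refine ⟨c • p, ?_, ?_⟩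
      · exact (mem_homogeneousSubmodule _ _).mp
          ((homogeneousSubmodule (Fin n) R k).smul_mem c
            ((mem_homogeneousSubmodule _ _).mpr hp))
      · rw [← hx, ← Ideal.Quotient.mkₐ_eq_mk R (bottIdeal R A), map_smul]
  · rintro ⟨p, hp, hz⟩
    exact Submodule.subset_span ⟨p, hp, hz⟩

lemma bottRel_zero (j : Fin n) :
    bottRel (ZMod 2) (0 : Matrix (Fin n) (Fin n) ℤ) j = X j ^ 2 := by
  simp [bottRel]

lemma X_sq (j : Fin n) :
    (X j : MvPolynomial (Fin n) (ZMod 2)) ^ 2 = monomial (Finsupp.single j 2) 1 := by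
  rw [X_pow_eq_monomial]

lemma deg_one {d : Fin n →₀ ℕ} (hd : d.degree = 1) : ∃ i, d = Finsupp.single i 1 := by
  have h0 : d ≠ 0 := by rintro rfl; simp at hd
  obtain ⟨i, hi⟩ : ∃ i, d i ≠ 0 := by
    by_contra hc; push_neg at hc; exact h0 (Finsupp.ext fun j => hc j)
  refine ⟨i, ?_⟩
  have h1 := Finsupp.single_add_erase i d
  have h2 : (Finsupp.single i (d i)).degree + (d.erase i).degree = 1 := by
    rw [← degree_add, h1, hd]
  have hds : (Finsupp.single i (d i)).degree = d i := by
    rcases eq_or_ne (d i) 0 with h | h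
    · simp [h]
    · simp [Finsupp.degree_apply, Finsupp.support_single_ne_zero _ h]
  rw [hds] at h2
  have hdi : d i = 1 ∧ (d.erase i).degree = 0 := by omega
  have he : d.erase i = 0 := (Finsupp.degree_eq_zero_iff _).mp hdi.2
  rw [← h1, he, add_zero, hdi.1]

lemma Xsq_mem (i : Fin n) : (X i : MvPolynomial (Fin n) (ZMod 2)) ^ 2 ∈
    bottIdeal (ZMod 2) (0 : Matrix (Fin n) (Fin n) ℤ) := by
  rw [← bottRel_zero]
  exact Ideal.subset_span ⟨i, rfl⟩

lemma piece_one_sq (z : BottRing (ZMod 2) (0 : Matrix (Fin n) (Fin n) ℤ))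
    (hz : z ∈ piece (ZMod 2) 0 1) : z ^ 2 = 0 := by
  obtain ⟨p, hp, rfl⟩ := mem_piece_iff.mp hz
  rw [← map_pow, Ideal.Quotient.eq_zero_iff_mem]
  have hp2 : p ^ 2 = ∑ v ∈ p.support,
      (monomial v (coeff v p) : MvPolynomial (Fin n) (ZMod 2)) ^ 2 := by
    conv_lhs => rw [← support_sum_monomial_coeff p]
    exact sum_pow_char (p := 2) _ _
  rw [hp2]
  apply Ideal.sum_mem
  intro v hv
  have hdeg : v.degree = 1 := by
    rw [Finsupp.degree_eq_weight_one]
    exact hp (mem_support_iff.mp hv)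
  obtain ⟨i, rfl⟩ := deg_one hdeg
  rw [monomial_pow]
  have h2 : (2 : ℕ) • Finsupp.single i (1 : ℕ) = Finsupp.single i 2 := by
    simp [Finsupp.smul_single]
  rw [h2]
  have hm : (monomial (Finsupp.single i 2) (coeff (Finsupp.single i 1) p ^ 2) :
      MvPolynomial (Fin n) (ZMod 2))
      = C (coeff (Finsupp.single i 1) p ^ 2) * X i ^ 2 := by
    rw [X_sq, C_mul_monomial, mul_one]
  rw [hm]
  exact Ideal.mul_mem_left _ _ (Xsq_mem i)

lemma pair_ne_sq {l k : Fin n} (hlk : l ≠ k) (m : Fin n) :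
    Finsupp.single l 1 + Finsupp.single k 1 ≠ Finsupp.single m 2 := by
  intro h
  have hl := DFunLike.congr_fun h l
  simp only [Finsupp.add_apply, Finsupp.single_apply, if_pos rfl] at hl
  rcases eq_or_ne m l with rfl | hm
  · simp [Ne.symm hlk] at hl
  · simp [Ne.symm hlk, hm] at hl

lemma sq_ne_pair {i j k : Fin n} (hij : i ≠ j) :
    Finsupp.single k 2 ≠ Finsupp.single i 1 + Finsupp.single j 1 := fun h =>
  pair_ne_sq hij k h.symm

lemma pair_eq_pair {l k i j : Fin n} (hlk : l < k) (hij : i < j)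
    (h : Finsupp.single l 1 + Finsupp.single k 1 = Finsupp.single i 1 + Finsupp.single j 1) :
    l = i ∧ k = j := by
  have hk : k = j := by
    by_contra hkj
    rcases eq_or_ne i k with rfl | hik
    · have h' : Finsupp.single l 1 + Finsupp.single i 1
          = Finsupp.single j 1 + Finsupp.single i 1 := by
        rw [h, add_comm]
      have hlj : l = j := (Finsupp.single_left_inj one_ne_zero).mp (add_right_cancel h')
      have hlt : l < j := hlk.trans hij
      rw [hlj] at hlt
      exact lt_irrefl _ hlt
    · have h1 := DFunLike.congr_fun h k
      simp [Finsupp.single_apply, hlk.ne, hik, (Ne.symm hkj : j ≠ k)] at h1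
  subst hk
  have h' : Finsupp.single l 1 = Finsupp.single i 1 := add_right_cancel h
  exact ⟨(Finsupp.single_left_inj one_ne_zero).mp h', rfl⟩

lemma CXX_eq (a : ZMod 2) (i j : Fin n) :
    C a * X i * X j = monomial (Finsupp.single i 1 + Finsupp.single j 1) a := by
  rw [show (X i : MvPolynomial (Fin n) (ZMod 2)) = monomial (Finsupp.single i 1) 1 by
      rw [← X_pow_eq_monomial, pow_one],
    show (X j : MvPolynomial (Fin n) (ZMod 2)) = monomial (Finsupp.single j 1) 1 by
      rw [← X_pow_eq_monomial, pow_one],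
    C_mul_monomial, monomial_mul, mul_one, mul_one]

lemma degree_single (i : Fin n) (k : ℕ) : (Finsupp.single i k).degree = k := by
  rcases eq_or_ne k 0 with rfl | h
  · simp
  · simp [Finsupp.degree_apply, Finsupp.support_single_ne_zero _ h]

lemma coeff_L (A : Matrix (Fin n) (Fin n) ℤ) (j : Fin n) (d : Fin n →₀ ℕ) :
    coeff d ((∑ l ∈ Finset.Iio j, C ((A l j : ZMod 2)) * X l) * X j)
      = ∑ l ∈ Finset.Iio j,
          (if Finsupp.single l 1 + Finsupp.single j 1 = d then ((A l j : ZMod 2)) else 0) := by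
  rw [Finset.sum_mul]
  rw [show ∀ q : Finset (Fin n), ∀ f : Fin n → MvPolynomial (Fin n) (ZMod 2),
      coeff d (∑ l ∈ q, f l) = ∑ l ∈ q, coeff d (f l) from fun q f => coeff_sum q f d]
  exact Finset.sum_congr rfl fun l _ => by rw [CXX_eq, coeff_monomial]

lemma coeff_rel (A : Matrix (Fin n) (Fin n) ℤ) (k : Fin n) (d : Fin n →₀ ℕ) :
    coeff d (bottRel (ZMod 2) A k)
      = (if Finsupp.single k 2 = d then 1 else 0)
        - ∑ l ∈ Finset.Iio k,
            (if Finsupp.single l 1 + Finsupp.single k 1 = d then ((A l k : ZMod 2)) else 0) := by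
  rw [bottRel, coeff_sub, X_sq, coeff_monomial, coeff_L]

lemma key {A : Matrix (Fin n) (Fin n) ℤ} {j : Fin n}
    (h : (∑ l ∈ Finset.Iio j, C ((A l j : ZMod 2)) * X l) * X j ∈ bottIdeal (ZMod 2) A)
    {i : Fin n} (hij : i < j) : ((A i j : ZMod 2)) = 0 := by
  obtain ⟨g, hg⟩ := Ideal.mem_span_range_iff_exists_fun.mp h
  have hco : ∀ d : Fin n →₀ ℕ, d.degree = 2 →
      coeff d ((∑ l ∈ Finset.Iio j, C ((A l j : ZMod 2)) * X l) * X j)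
        = ∑ k, constantCoeff (g k) * coeff d (bottRel (ZMod 2) A k) := by
    intro d hd
    rw [← hg, show ∀ f : Fin n → MvPolynomial (Fin n) (ZMod 2),
        coeff d (∑ k, f k) = ∑ k, coeff d (f k) from fun f => coeff_sum _ f d]
    exact Finset.sum_congr rfl fun k _ => coeff_mul_homog (bottRel_hom A k) hd
  -- step 1 : constantCoeff (g j) = 0
  have e1 := hco (Finsupp.single j 2) (degree_single j 2)
  rw [coeff_L] at e1
  have hL1 : ∑ l ∈ Finset.Iio j,
      (if Finsupp.single l 1 + Finsupp.single j 1 = Finsupp.single j 2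
        then ((A l j : ZMod 2)) else 0) = 0 :=
    Finset.sum_eq_zero fun l hl =>
      if_neg (pair_ne_sq (Finset.mem_Iio.mp hl).ne j)
  rw [hL1] at e1
  have hR1 : ∀ k : Fin n, coeff (Finsupp.single j 2) (bottRel (ZMod 2) A k)
      = if k = j then 1 else 0 := by
    intro k
    rw [coeff_rel]
    have hz : ∑ l ∈ Finset.Iio k,
        (if Finsupp.single l 1 + Finsupp.single k 1 = Finsupp.single j 2
          then ((A l k : ZMod 2)) else 0) = 0 :=
      Finset.sum_eq_zero fun l hl => if_neg (pair_ne_sq (Finset.mem_Iio.mp hl).ne j)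
    rw [hz, sub_zero]
    congr 1
    simp [Finsupp.single_left_inj (two_ne_zero (α := ℕ))]
  simp only [hR1] at e1
  simp only [mul_ite, mul_one, mul_zero] at e1
  rw [Finset.sum_ite_eq' Finset.univ j (fun k => constantCoeff (g k))] at e1
  simp only [Finset.mem_univ, if_true] at e1
  -- e1 : 0 = constantCoeff (g j)
  -- step 2 : evaluate at the monomial x_i x_j
  have hd2 : (Finsupp.single i 1 + Finsupp.single j 1).degree = 2 := by
    rw [degree_add, degree_single, degree_single]
  have e2 := hco _ hd2
  rw [coeff_L] at e2
  have hL2 : ∑ l ∈ Finset.Iio j,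
      (if Finsupp.single l 1 + Finsupp.single j 1 = Finsupp.single i 1 + Finsupp.single j 1
        then ((A l j : ZMod 2)) else 0) = ((A i j : ZMod 2)) := by
    rw [Finset.sum_eq_single i]
    · rw [if_pos rfl]
    · intro l hl hli
      exact if_neg fun hc =>
        hli (pair_eq_pair (Finset.mem_Iio.mp hl) hij hc).1
    · intro hni
      exact absurd (Finset.mem_Iio.mpr hij) hni
  rw [hL2] at e2
  have hR2 : ∀ k : Fin n, k ≠ j →
      constantCoeff (g k) * coeff (Finsupp.single i 1 + Finsupp.single j 1)
        (bottRel (ZMod 2) A k) = 0 := by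
    intro k hk
    rw [coeff_rel, if_neg (sq_ne_pair hij.ne),
      Finset.sum_eq_zero fun l hl => if_neg fun hc =>
        hk (pair_eq_pair (Finset.mem_Iio.mp hl) hij hc).2]
    simp
  rw [Finset.sum_eq_single j (fun k _ => hR2 k) (fun hnj => absurd (Finset.mem_univ j) hnj),
    ← e1, zero_mul] at e2
  exact e2
end Z2Aux
end Z2Aux

/-- ℤ/2-triviality of `M(A)` is equivalent to all `α_j` being even,
which is equivalent to all entries of `A` being even. -/

theorem z2_trivial_tfae (n : ℕ) (A : Matrix (Fin n) (Fin n) ℤ) (hA : StrictUpper A) :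
    ((∃ ψ : BottRing (ZMod 2) A ≃+* BottRing (ZMod 2) (0 : Matrix (Fin n) (Fin n) ℤ),
        IsGradedIso ψ) ↔ (∀ j, EvenAlpha A j)) ∧
    ((∀ j, EvenAlpha A j) ↔ (∀ i j : Fin n, 2 ∣ A i j)) := by
  constructor
  · constructor
    · rintro ⟨ψ, hψ⟩ j i hij
      have h1 : bx (ZMod 2) A j ∈ piece (ZMod 2) A 1 :=
        Z2Aux.mem_piece_iff.mpr ⟨X j, isHomogeneous_X _ _, rfl⟩
      have h2 := (hψ 1 _).mp h1
      have h3 : bx (ZMod 2) A j ^ 2 = 0 := by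
        apply ψ.injective
        rw [map_pow, map_zero]
        exact Z2Aux.piece_one_sq _ h2
      have h4 : Ideal.Quotient.mk (bottIdeal (ZMod 2) A)
          ((X j : MvPolynomial (Fin n) (ZMod 2)) ^ 2) = 0 := by
        rw [map_pow]; exact h3
      have h5 : Ideal.Quotient.mk (bottIdeal (ZMod 2) A)
          ((∑ l ∈ Finset.Iio j, C ((A l j : ZMod 2)) * X l) * X j) = 0 := by
        have hrel : Ideal.Quotient.mk (bottIdeal (ZMod 2) A) (bottRel (ZMod 2) A j) = 0 :=
          Ideal.Quotient.eq_zero_iff_mem.mpr (Ideal.subset_span ⟨j, rfl⟩)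
        rw [bottRel, map_sub, h4, zero_sub, neg_eq_zero] at hrel
        exact hrel
      exact (ZMod.intCast_zmod_eq_zero_iff_dvd _ 2).mp
        (Z2Aux.key (Ideal.Quotient.eq_zero_iff_mem.mp h5) hij)
    · intro hev
      have hrel : bottRel (ZMod 2) A = bottRel (ZMod 2) (0 : Matrix (Fin n) (Fin n) ℤ) := by
        funext j
        rw [bottRel, bottRel]
        congr 1
        rw [show ∑ l ∈ Finset.Iio j, C (((0 : Matrix (Fin n) (Fin n) ℤ) l j : ZMod 2)) * X l
              = (0 : MvPolynomial (Fin n) (ZMod 2)) from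
            Finset.sum_eq_zero fun l hl => by simp,
          show (∑ l ∈ Finset.Iio j, C ((A l j : ZMod 2)) * X l)
              = (0 : MvPolynomial (Fin n) (ZMod 2)) from
            Finset.sum_eq_zero fun l hl => by
              rw [show ((A l j : ZMod 2)) = 0 from
                  (ZMod.intCast_zmod_eq_zero_iff_dvd _ 2).mpr (hev j l (Finset.mem_Iio.mp hl)),
                map_zero, zero_mul]]
      have hid : bottIdeal (ZMod 2) A = bottIdeal (ZMod 2) 0 := by
        rw [bottIdeal, bottIdeal, hrel]
      refine ⟨Ideal.quotEquivOfEq hid, ?_⟩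
      intro k z
      rw [Z2Aux.mem_piece_iff, Z2Aux.mem_piece_iff]
      constructor
      · rintro ⟨p, hp, hz⟩
        exact ⟨p, hp, by rw [← hz, Ideal.quotEquivOfEq_mk]⟩
      · rintro ⟨p, hp, hz⟩
        refine ⟨p, hp, ?_⟩
        apply (Ideal.quotEquivOfEq hid).injective
        rw [Ideal.quotEquivOfEq_mk, hz]
  · constructor
    · intro hev i j
      rcases lt_or_ge i j with h | h
      · exact hev j i h
      · rw [hA i j h]; exact dvd_zero 2
    · intro h j i _
      exact h i j

end
end
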